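/- arXiv:1808.08487 — 5 statements merged into one kernel-verified Lean document; each statement's English description precedes it below -/
import Mathlib

section
/- Let m ≥ 1 and 1 ≤ ℓ ≤ m, and let f_1, …, f_ℓ be Boolean functions from GF(2^{2m}) to GF(2). Then (f_1, …, f_ℓ) is a (2m, ℓ) bent vectorial function if and only if the binary linear code C(f_1, …, f_ℓ) has the following weight distribution: exactly 1 codeword of Hamming weight 0, exactly (2^ℓ − 1)·2^{2m} codewords of weight 2^{2m−1} − 2^{m−1}, exactly 2(2^{2m} − 1) codewords of weight 2^{2m−1}, exactly (2^ℓ − 1)·2^{2m} codewords of weight 2^{2m−1} + 2^{m−1}, exactly 1 codeword of weight 2^{2m}, and no codewords of any other weight. -/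
noncomputable section

/-- The finite field `GF(2^n)` is finite. -/
instance (n : ℕ) : Fintype (GaloisField 2 n) := Fintype.ofFinite _

/-- The absolute trace map from `GF(2^(2m))` to `GF(2)`. -/
def tr (m : ℕ) (x : GaloisField 2 (2*m)) : ZMod 2 :=
  Algebra.trace (ZMod 2) (GaloisField 2 (2*m)) x

/-- A Boolean function `f : GF(2^(2m)) → GF(2)` is bent if all its Walsh
transform values have absolute value `2^m`. -/
def IsBent (m : ℕ) (f : GaloisField 2 (2*m) → ZMod 2) : Prop :=
  ∀ w : GaloisField 2 (2*m),
    |∑ x : GaloisField 2 (2*m), (-1 : ℤ) ^ ((f x + tr m (w * x)).val)| = 2 ^ m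

/-- A tuple `(f 0, …, f (ℓ-1))` of Boolean functions on `GF(2^(2m))` is a
`(2m, ℓ)` bent vectorial function if every nonzero `GF(2)`-linear combination
of the `f j` is bent. -/
def IsBentVectorial (m ℓ : ℕ) (f : Fin ℓ → GaloisField 2 (2*m) → ZMod 2) : Prop :=
  ∀ a : Fin ℓ → ZMod 2, a ≠ 0 → IsBent m (fun x => ∑ j, a j * f j x)

/-- The binary linear code `C(f 0, …, f (ℓ-1))` of length `2^(2m)` (with
coordinates indexed by `GF(2^(2m))`, a codeword being a function
`GF(2^(2m)) → GF(2)`, i.e. the truth table of a Boolean function), spanned by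
the truth tables of the `f j`, the truth tables of the linear functions
`x ↦ tr (w * x)` for all `w`, and the all-one vector. -/
def code (m ℓ : ℕ) (f : Fin ℓ → GaloisField 2 (2*m) → ZMod 2) :
    Submodule (ZMod 2) (GaloisField 2 (2*m) → ZMod 2) :=
  Submodule.span (ZMod 2)
    (Set.range f ∪ Set.range (fun w => fun x => tr m (w * x)) ∪ {fun _ => (1 : ZMod 2)})

/-- The Hamming weight of a codeword: the number of nonzero coordinates. -/
def wt (m : ℕ) (c : GaloisField 2 (2*m) → ZMod 2) : ℕ :=
  {x | c x ≠ 0}.ncard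

/-- The support of a codeword: the set of coordinates where it is nonzero. -/
def supp (m : ℕ) (c : GaloisField 2 (2*m) → ZMod 2) : Set (GaloisField 2 (2*m)) :=
  {x | c x ≠ 0}

/-!
With `χ u = (-1) ^ u`, a Boolean function `c` on `GF(2^(2m))` satisfies
`∑ x, χ (c x) = 2^(2m) - 2 wt c`, so the Walsh values `±2^m` of a bent function are exactly the
weights `2^(2m-1) ∓ 2^(m-1)`. Every codeword is `∑ aⱼ fⱼ + Tr (w ·) + ε`. Those with `a = 0` are
the affine functions, of weight `0`, `2^(2m)` or (for `w ≠ 0`) `2^(2m-1)`. If `f` is bent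
vectorial, every codeword with `a ≠ 0` has weight `2^(2m-1) ± 2^(m-1)`, and adding `ε = 1`
swaps the two signs; in particular only the zero parameter gives the zero codeword, so the
parametrization is injective and counting parameters gives the weight distribution.
Conversely, the distribution gives `|C| = 2^(ℓ+2m+1)`, so the parametrization is injective; the
affine codewords then exhaust the prescribed numbers of words of weights `0`, `2^(2m-1)` and
`2^(2m)`, so every codeword with `a ≠ 0` has weight `2^(2m-1) ± 2^(m-1)`, i.e. every nonzero
combination `∑ aⱼ fⱼ` is bent.
-/

namespace BentCode

open Finset

def chi (u : ZMod 2) : ℤ := (-1) ^ u.val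

lemma chi_add (u v : ZMod 2) : chi (u + v) = chi u * chi v := by
  revert u v; decide

lemma chi_one : chi 1 = -1 := rfl

lemma sum_zmod_two {M : Type*} [AddCommMonoid M] (g : ZMod 2 → M) : ∑ ε, g ε = g 0 + g 1 :=
  Fin.sum_univ_two g

lemma sum_chi_eq_card_sub {α : Type*} [Fintype α] (c : α → ZMod 2) :
    ∑ x, chi (c x) = Fintype.card α - 2 * {x | c x ≠ 0}.ncard := by
  classical
  have hchi : ∀ u : ZMod 2, chi u = 1 - 2 * if u ≠ 0 then 1 else 0 := by decide
  rw [Set.ncard_eq_toFinset_card', Set.toFinset_ofPred, card_filter]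
  simp only [hchi, sum_sub_distrib, ← mul_sum, sum_const, card_univ]
  push_cast
  ring

lemma ncard_eq_sum_ncard_fiber {α : Type*} [Finite α] (s : Set α) {g : α → ℕ} {n : ℕ}
    (hg : ∀ x, g x ≤ n) :
    s.ncard = ∑ k ∈ range (n + 1), {x | x ∈ s ∧ g x = k}.ncard := by
  classical
  have := Fintype.ofFinite α
  simp only [Set.ncard_eq_toFinset_card', Set.toFinset_ofPred]
  rw [card_eq_sum_card_fiberwise (f := g) (t := range (n + 1))
    (fun x _ => by simpa using Nat.lt_succ_of_le (hg x))]
  refine sum_congr rfl fun k _ => ?_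
  congr 1
  ext
  simp

lemma injective_of_card_fiber_zero_eq_one {M N : Type*} [AddGroup M] [AddZeroClass N]
    [Fintype M] [DecidableEq N] (φ : M →+ N) (h : #{t | φ t = 0} = 1) :
    Function.Injective φ := by
  obtain ⟨t₀, ht₀⟩ := card_eq_one.mp h
  have hmem : ∀ t, φ t = 0 → t = t₀ := fun t ht => by
    have ht' : t ∈ ({t | φ t = 0} : Finset M) := by simpa using ht
    simpa [ht₀] using ht'
  exact (injective_iff_map_eq_zero φ).mpr fun t ht =>
    (hmem t ht).trans (hmem 0 (map_zero φ)).symm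

variable {m ℓ : ℕ}

lemma two_pow_relations (hm : 1 ≤ m) :
    2 ^ (2 * m) = 2 * 2 ^ (2 * m - 1) ∧ 2 ^ m = 2 * 2 ^ (m - 1) ∧
      2 * 2 ^ (m - 1) ≤ 2 ^ (2 * m - 1) ∧ 1 ≤ 2 ^ (m - 1) := by
  refine ⟨?_, ?_, ?_, Nat.one_le_two_pow⟩
  · rw [← pow_succ']; congr 1; omega
  · rw [← pow_succ']; congr 1; omega
  · rw [← pow_succ']; exact Nat.pow_le_pow_right two_pos (by omega)

lemma card_galoisField {n : ℕ} (hn : n ≠ 0) : Fintype.card (GaloisField 2 n) = 2 ^ n := by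
  rw [← Nat.card_eq_fintype_card, GaloisField.card 2 n hn]

lemma sum_chi_eq_wt (hm : 1 ≤ m) (c : GaloisField 2 (2 * m) → ZMod 2) :
    ∑ x, chi (c x) = 2 ^ (2 * m) - 2 * (wt m c : ℤ) := by
  rw [sum_chi_eq_card_sub, card_galoisField (by omega)]
  push_cast
  rfl

lemma wt_le (hm : 1 ≤ m) (c : GaloisField 2 (2 * m) → ZMod 2) : wt m c ≤ 2 ^ (2 * m) := by
  rw [← card_galoisField (by omega), ← Nat.card_eq_fintype_card]
  exact Set.ncard_le_card _

lemma wt_eq_zero_iff (c : GaloisField 2 (2 * m) → ZMod 2) : wt m c = 0 ↔ c = 0 := by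
  rw [wt, Set.ncard_eq_zero]
  simp [Set.eq_empty_iff_forall_notMem, funext_iff]

lemma wt_add_one (hm : 1 ≤ m) (c : GaloisField 2 (2 * m) → ZMod 2) :
    wt m (c + 1) = 2 ^ (2 * m) - wt m c := by
  have hsum : ∑ x, chi (c x + 1) = -∑ x, chi (c x) := by
    simp only [chi_add, chi_one, mul_neg_one, sum_neg_distrib]
  have h := sum_chi_eq_wt hm (c + 1)
  simp only [Pi.add_apply, Pi.one_apply, hsum, sum_chi_eq_wt hm] at h
  have hle := wt_le hm c
  zify [hle]
  omega

lemma wt_one (hm : 1 ≤ m) : wt m 1 = 2 ^ (2 * m) := by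
  simpa [(wt_eq_zero_iff 0).mpr rfl] using wt_add_one hm 0

lemma abs_sum_chi_eq_two_pow_iff (hm : 1 ≤ m) (c : GaloisField 2 (2 * m) → ZMod 2) :
    |∑ x, chi (c x)| = 2 ^ m ↔
      wt m c = 2 ^ (2 * m - 1) - 2 ^ (m - 1) ∨ wt m c = 2 ^ (2 * m - 1) + 2 ^ (m - 1) := by
  obtain ⟨hN, hB, hBA, -⟩ := two_pow_relations hm
  rw [sum_chi_eq_wt hm, abs_eq (by positivity)]
  zify [hBA.trans' (by omega : 2 ^ (m - 1) ≤ 2 * 2 ^ (m - 1))] at hN hB ⊢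
  omega

lemma isBent_iff_wt (hm : 1 ≤ m) (g : GaloisField 2 (2 * m) → ZMod 2) :
    IsBent m g ↔ ∀ w, wt m (fun x => g x + tr m (w * x)) = 2 ^ (2 * m - 1) - 2 ^ (m - 1) ∨
      wt m (fun x => g x + tr m (w * x)) = 2 ^ (2 * m - 1) + 2 ^ (m - 1) :=
  forall_congr' fun _ => abs_sum_chi_eq_two_pow_iff hm _

lemma tr_add (a b : GaloisField 2 (2 * m)) : tr m (a + b) = tr m a + tr m b :=
  map_add _ a b

@[simp]
lemma tr_zero : tr m 0 = 0 :=
  map_zero _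

lemma exists_tr_mul_eq_one {w : GaloisField 2 (2 * m)} (hw : w ≠ 0) :
    ∃ y, tr m (w * y) = 1 := by
  have : Algebra.IsSeparable (ZMod 2) (GaloisField 2 (2 * m)) := IsGalois.to_isSeparable
  obtain ⟨z, hz⟩ := Algebra.trace_surjective (ZMod 2) (GaloisField 2 (2 * m)) 1
  exact ⟨w⁻¹ * z, by rwa [← mul_assoc, mul_inv_cancel₀ hw, one_mul]⟩

lemma sum_chi_tr_mul {w : GaloisField 2 (2 * m)} (hw : w ≠ 0) :
    ∑ x, chi (tr m (w * x)) = 0 := by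
  obtain ⟨y, hy⟩ := exists_tr_mul_eq_one hw
  have hshift := Equiv.sum_comp (Equiv.addRight y) fun x => chi (tr m (w * x))
  simp only [Equiv.coe_addRight, mul_add, tr_add, hy, chi_add, chi_one, mul_neg_one,
    sum_neg_distrib] at hshift
  linarith

lemma wt_tr_mul (hm : 1 ≤ m) {w : GaloisField 2 (2 * m)} (hw : w ≠ 0) :
    wt m (fun x => tr m (w * x)) = 2 ^ (2 * m - 1) := by
  have h := sum_chi_eq_wt hm fun x => tr m (w * x)
  have hN : (2 : ℤ) ^ (2 * m) = 2 * 2 ^ (2 * m - 1) := by exact_mod_cast (two_pow_relations hm).1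
  rw [sum_chi_tr_mul hw, hN] at h
  zify
  omega

def codeParam (f : Fin ℓ → GaloisField 2 (2 * m) → ZMod 2) :
    (Fin ℓ → ZMod 2) × GaloisField 2 (2 * m) × ZMod 2 →ₗ[ZMod 2]
      (GaloisField 2 (2 * m) → ZMod 2) where
  toFun t x := ∑ j, t.1 j * f j x + tr m (t.2.1 * x) + t.2.2
  map_add' s t := by
    funext x
    simp only [Prod.fst_add, Prod.snd_add, Pi.add_apply, add_mul, sum_add_distrib, tr_add]
    ring
  map_smul' c t := by
    funext x
    simp [tr, mul_sum, mul_add, mul_assoc]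

@[simp]
lemma codeParam_apply (f : Fin ℓ → GaloisField 2 (2 * m) → ZMod 2)
    (t : (Fin ℓ → ZMod 2) × GaloisField 2 (2 * m) × ZMod 2) (x : GaloisField 2 (2 * m)) :
    codeParam f t x = ∑ j, t.1 j * f j x + tr m (t.2.1 * x) + t.2.2 :=
  rfl

lemma range_codeParam (f : Fin ℓ → GaloisField 2 (2 * m) → ZMod 2) :
    LinearMap.range (codeParam f) = code m ℓ f := by
  apply le_antisymm
  · rintro _ ⟨⟨a, w, ε⟩, rfl⟩
    have hsum : codeParam f (a, w, ε) =
        ∑ j, a j • f j + (fun x => tr m (w * x)) + ε • fun _ => 1 := by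
      funext x
      simp [Finset.sum_apply]
    rw [hsum]
    refine add_mem (add_mem (sum_mem fun j _ => Submodule.smul_mem _ _ ?_) ?_)
      (Submodule.smul_mem _ _ ?_) <;> apply Submodule.subset_span
    exacts [.inl (.inl ⟨j, rfl⟩), .inl (.inr ⟨w, rfl⟩), .inr rfl]
  · rw [code, Submodule.span_le]
    rintro _ ((⟨j, rfl⟩ | ⟨w, rfl⟩) | rfl)
    · exact ⟨(Pi.single j 1, 0, 0), by funext x; simp [Pi.single_apply]⟩
    · exact ⟨(0, w, 0), by funext x; simp⟩
    · exact ⟨(0, 0, 1), by funext x; simp⟩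

def fiberCount (f : Fin ℓ → GaloisField 2 (2 * m) → ZMod 2) (a : Fin ℓ → ZMod 2)
    (k : ℕ) : ℕ :=
  #{p : GaloisField 2 (2 * m) × ZMod 2 | wt m (codeParam f (a, p.1, p.2)) = k}

lemma card_filter_wt_codeParam (f : Fin ℓ → GaloisField 2 (2 * m) → ZMod 2) (k : ℕ) :
    #{t | wt m (codeParam f t) = k} = ∑ a, fiberCount f a k := by
  simp only [fiberCount, card_filter]
  exact Fintype.sum_prod_type _

/- The number of `(w, ε)` for which `Tr (w x) + ε` has weight `k`, and for which
`g x + Tr (w x) + ε` has weight `k` when `g` is bent. -/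
def affineWeightCount (m k : ℕ) : ℕ :=
  (if k = 0 then 1 else 0) + (if k = 2 ^ (2 * m) then 1 else 0) +
    if k = 2 ^ (2 * m - 1) then 2 * (2 ^ (2 * m) - 1) else 0

def bentWeightCount (m k : ℕ) : ℕ :=
  (if k = 2 ^ (2 * m - 1) - 2 ^ (m - 1) then 2 ^ (2 * m) else 0) +
    if k = 2 ^ (2 * m - 1) + 2 ^ (m - 1) then 2 ^ (2 * m) else 0

def weightDist (m ℓ k : ℕ) : ℕ :=
  if k = 0 then 1
  else if k = 2^(2*m-1) - 2^(m-1) then (2^ℓ - 1) * 2^(2*m)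
  else if k = 2^(2*m-1) then 2 * (2^(2*m) - 1)
  else if k = 2^(2*m-1) + 2^(m-1) then (2^ℓ - 1) * 2^(2*m)
  else if k = 2^(2*m) then 1
  else 0

lemma fiberCount_zero (hm : 1 ≤ m) (f : Fin ℓ → GaloisField 2 (2 * m) → ZMod 2) (k : ℕ) :
    fiberCount f 0 k = affineWeightCount m k := by
  classical
  obtain ⟨hN, -, hBA, hB⟩ := two_pow_relations hm
  have hconst : ∀ ε, codeParam f (0, 0, ε) = fun _ => ε := fun ε => by funext; simp
  have htr : ∀ w ∈ ({0}ᶜ : Finset (GaloisField 2 (2 * m))),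
      ∑ ε, (if wt m (codeParam f (0, w, ε)) = k then 1 else 0) =
        2 * if k = 2 ^ (2 * m - 1) then 1 else 0 := by
    intro w hw
    have hw : w ≠ 0 := by simpa using hw
    have h0 : codeParam f (0, w, 0) = fun x => tr m (w * x) := by funext; simp
    have h1 : codeParam f (0, w, 1) = (fun x => tr m (w * x)) + 1 := by funext; simp
    rw [sum_zmod_two, h0, h1, wt_add_one hm, wt_tr_mul hm hw]
    split_ifs <;> omega
  have h0 : wt m (fun _ => (0 : ZMod 2)) = 0 := (wt_eq_zero_iff _).mpr rfl
  have h1 : wt m (fun _ => (1 : ZMod 2)) = 2 ^ (2 * m) := wt_one hm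
  rw [fiberCount, card_filter, Fintype.sum_prod_type]
  dsimp only
  rw [Fintype.sum_eq_add_sum_compl (0 : GaloisField 2 (2 * m)), sum_congr rfl htr,
    sum_zmod_two, hconst, hconst, h0, h1, sum_const, card_compl, card_singleton,
    card_galoisField (show 2 * m ≠ 0 by omega), smul_eq_mul, affineWeightCount]
  split_ifs <;> omega

lemma ite_wt_add_ite_wt_add_one (hm : 1 ≤ m) {c : GaloisField 2 (2 * m) → ZMod 2}
    (hc : wt m c = 2 ^ (2 * m - 1) - 2 ^ (m - 1) ∨ wt m c = 2 ^ (2 * m - 1) + 2 ^ (m - 1))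
    (k : ℕ) :
    ((if wt m c = k then 1 else 0) + if wt m (c + 1) = k then 1 else 0) =
      (if k = 2 ^ (2 * m - 1) - 2 ^ (m - 1) then 1 else 0) +
        if k = 2 ^ (2 * m - 1) + 2 ^ (m - 1) then 1 else 0 := by
  obtain ⟨hN, -, hBA, hB⟩ := two_pow_relations hm
  rw [wt_add_one hm]
  rcases hc with h | h <;> rw [h] <;> split_ifs <;> omega

lemma fiberCount_of_isBent (hm : 1 ≤ m) (f : Fin ℓ → GaloisField 2 (2 * m) → ZMod 2)
    {a : Fin ℓ → ZMod 2} (hb : IsBent m fun x => ∑ j, a j * f j x) (k : ℕ) :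
    fiberCount f a k = bentWeightCount m k := by
  have hpair : ∀ w, ∑ ε, (if wt m (codeParam f (a, w, ε)) = k then 1 else 0) =
      (if k = 2 ^ (2 * m - 1) - 2 ^ (m - 1) then 1 else 0) +
        if k = 2 ^ (2 * m - 1) + 2 ^ (m - 1) then 1 else 0 := by
    intro w
    have h0 : codeParam f (a, w, 0) = fun x => ∑ j, a j * f j x + tr m (w * x) := by
      funext; simp
    have h1 : codeParam f (a, w, 1) = codeParam f (a, w, 0) + 1 := by funext; simp
    rw [sum_zmod_two, h1]
    exact ite_wt_add_ite_wt_add_one hm (h0 ▸ (isBent_iff_wt hm _).mp hb w) k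
  rw [fiberCount, card_filter, Fintype.sum_prod_type]
  simp only [hpair, sum_const, card_univ, card_galoisField (show 2 * m ≠ 0 by omega),
    smul_eq_mul, bentWeightCount, mul_add, mul_ite, mul_one, mul_zero]

lemma weightDist_eq_add (hm : 1 ≤ m) (k : ℕ) :
    weightDist m ℓ k = affineWeightCount m k + (2 ^ ℓ - 1) * bentWeightCount m k := by
  obtain ⟨hN, -, hBA, hB⟩ := two_pow_relations hm
  simp only [weightDist, affineWeightCount, bentWeightCount, mul_add, mul_ite, mul_zero]
  generalize (2 ^ ℓ - 1) * 2 ^ (2 * m) = P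
  split_ifs <;> omega

lemma sum_weightDist (hm : 1 ≤ m) :
    ∑ k ∈ range (2 ^ (2 * m) + 1), weightDist m ℓ k = 2 ^ ℓ * (2 ^ (2 * m) * 2) := by
  obtain ⟨hN, -, hBA, hB⟩ := two_pow_relations hm
  simp only [weightDist_eq_add hm, affineWeightCount, bentWeightCount, sum_add_distrib,
    ← mul_sum, sum_ite_eq', mem_range]
  rw [if_pos (by omega), if_pos (by omega), if_pos (by omega), if_pos (by omega),
    if_pos (by omega)]
  zify [Nat.one_le_two_pow (n := ℓ), Nat.one_le_two_pow (n := 2 * m)]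
  ring

lemma card_filter_wt_codeParam_of_isBentVectorial (hm : 1 ≤ m)
    {f : Fin ℓ → GaloisField 2 (2 * m) → ZMod 2} (hb : IsBentVectorial m ℓ f) (k : ℕ) :
    #{t | wt m (codeParam f t) = k} = weightDist m ℓ k := by
  have hcard : Fintype.card (Fin ℓ → ZMod 2) = 2 ^ ℓ := by simp
  rw [card_filter_wt_codeParam, Fintype.sum_eq_add_sum_compl 0, fiberCount_zero hm,
    sum_congr rfl fun a ha => fiberCount_of_isBent hm f (hb a (by simpa using ha)) k,
    sum_const, card_compl, card_singleton, hcard, smul_eq_mul, weightDist_eq_add hm]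

lemma injective_codeParam_of_isBentVectorial (hm : 1 ≤ m)
    {f : Fin ℓ → GaloisField 2 (2 * m) → ZMod 2} (hb : IsBentVectorial m ℓ f) :
    Function.Injective (codeParam f) := by
  classical
  apply injective_of_card_fiber_zero_eq_one (codeParam f).toAddMonoidHom
  simpa [← wt_eq_zero_iff, weightDist] using
    card_filter_wt_codeParam_of_isBentVectorial hm hb 0

lemma ncard_wt_eq_of_injective {f : Fin ℓ → GaloisField 2 (2 * m) → ZMod 2}
    (hinj : Function.Injective (codeParam f)) (k : ℕ) :
    {c | c ∈ code m ℓ f ∧ wt m c = k}.ncard = #{t | wt m (codeParam f t) = k} := by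
  have himage :
      {c | c ∈ code m ℓ f ∧ wt m c = k} = codeParam f '' {t | wt m (codeParam f t) = k} := by
    ext c
    rw [← range_codeParam]
    constructor
    · rintro ⟨⟨t, rfl⟩, hk⟩
      exact ⟨t, hk, rfl⟩
    · rintro ⟨t, hk, rfl⟩
      exact ⟨⟨t, rfl⟩, hk⟩
  rw [himage, Set.ncard_image_of_injective _ hinj, Set.ncard_eq_toFinset_card',
    Set.toFinset_ofPred]

lemma injective_codeParam_of_weightDist (hm : 1 ≤ m)
    {f : Fin ℓ → GaloisField 2 (2 * m) → ZMod 2}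
    (hdist : ∀ k, {c | c ∈ code m ℓ f ∧ wt m c = k}.ncard = weightDist m ℓ k) :
    Function.Injective (codeParam f) := by
  have hcode : (code m ℓ f : Set (GaloisField 2 (2 * m) → ZMod 2)).ncard =
      Nat.card ((Fin ℓ → ZMod 2) × GaloisField 2 (2 * m) × ZMod 2) := by
    rw [ncard_eq_sum_ncard_fiber _ (wt_le hm)]
    simp only [SetLike.mem_coe]
    rw [sum_congr rfl fun k _ => hdist k, sum_weightDist hm]
    simp [card_galoisField (show 2 * m ≠ 0 by omega)]
  rw [← range_codeParam, LinearMap.coe_range, ← Set.image_univ, ← Set.ncard_univ] at hcode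
  exact Set.injOn_univ.mp (Set.injOn_of_ncard_image_eq hcode)

lemma isBentVectorial_of_weightDist (hm : 1 ≤ m)
    {f : Fin ℓ → GaloisField 2 (2 * m) → ZMod 2}
    (hdist : ∀ k, {c | c ∈ code m ℓ f ∧ wt m c = k}.ncard = weightDist m ℓ k) :
    IsBentVectorial m ℓ f := by
  intro a ha
  rw [isBent_iff_wt hm]
  intro w
  have hc : codeParam f (a, w, 0) = fun x => ∑ j, a j * f j x + tr m (w * x) := by
    funext; simp
  rw [← hc]
  set k := wt m (codeParam f (a, w, 0))
  have hfiber : 0 < fiberCount f a k := card_pos.mpr ⟨(w, 0), by simp [k]⟩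
  have hk := hdist k
  rw [ncard_wt_eq_of_injective (injective_codeParam_of_weightDist hm hdist),
    card_filter_wt_codeParam, Fintype.sum_eq_add_sum_compl 0, fiberCount_zero hm,
    weightDist_eq_add hm, add_right_inj] at hk
  -- The affine codewords (`a = 0`) already exhaust the prescribed counts of all weights other
  -- than `2 ^ (2 * m - 1) ± 2 ^ (m - 1)`.
  have hbent : bentWeightCount m k ≠ 0 := by
    intro h0
    rw [h0, mul_zero, sum_eq_zero_iff] at hk
    exact hfiber.ne' (hk a (by simpa using ha))
  by_contra hk'
  obtain ⟨h₁, h₂⟩ := not_or.mp hk'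
  exact hbent (by simp [bentWeightCount, h₁, h₂])

end BentCode

theorem stmt_0_general (m ℓ : ℕ) (hm : 1 ≤ m)
    (f : Fin ℓ → GaloisField 2 (2*m) → ZMod 2) :
    IsBentVectorial m ℓ f ↔
      ∀ k : ℕ, {c | c ∈ code m ℓ f ∧ wt m c = k}.ncard =
        if k = 0 then 1
        else if k = 2^(2*m-1) - 2^(m-1) then (2^ℓ - 1) * 2^(2*m)
        else if k = 2^(2*m-1) then 2 * (2^(2*m) - 1)
        else if k = 2^(2*m-1) + 2^(m-1) then (2^ℓ - 1) * 2^(2*m)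
        else if k = 2^(2*m) then 1
        else 0 :=
  ⟨fun hb k =>
    (BentCode.ncard_wt_eq_of_injective
      (BentCode.injective_codeParam_of_isBentVectorial hm hb) k).trans
      (BentCode.card_filter_wt_codeParam_of_isBentVectorial hm hb k),
    BentCode.isBentVectorial_of_weightDist hm⟩

/-- coding-theoretic characterization of bent vectorial
functions via the weight distribution of `C(f_1, …, f_ℓ)`. -/
theorem stmt_0 (m ℓ : ℕ) (hm : 1 ≤ m) (hℓ1 : 1 ≤ ℓ) (hℓm : ℓ ≤ m)
    (f : Fin ℓ → GaloisField 2 (2*m) → ZMod 2) :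
    IsBentVectorial m ℓ f ↔
      ∀ k : ℕ, {c | c ∈ code m ℓ f ∧ wt m c = k}.ncard =
        if k = 0 then 1
        else if k = 2^(2*m-1) - 2^(m-1) then (2^ℓ - 1) * 2^(2*m)
        else if k = 2^(2*m-1) then 2 * (2^(2*m) - 1)
        else if k = 2^(2*m-1) + 2^(m-1) then (2^ℓ - 1) * 2^(2*m)
        else if k = 2^(2*m) then 1
        else 0 :=
  stmt_0_general m ℓ hm f
end
end

section
/- Let m ≥ 2, 1 ≤ ℓ ≤ m, and let (f_1, …, f_ℓ) be a (2m, ℓ) bent vectorial function on GF(2^{2m}). Then the supports of the codewords of Hamming weight 2^{2m−1} − 2^{m−1} of C(f_1, …, f_ℓ) hold a 2-design: for every two distinct elements x, y of GF(2^{2m}), the number of codewords c of C(f_1, …, f_ℓ) of Hamming weight 2^{2m−1} − 2^{m−1} with c_x = c_y = 1 is exactly (2^ℓ − 1)(2^{2m−2} − 2^{m−1}). -/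
/-!
Every codeword is `c = g_a + Tr(w ·) + ε` with `g_a = ∑ⱼ aⱼ fⱼ`, and `(a, w, ε)` is determined
by `c` because a bent function is not affine. The weight `2^(2m-1) - 2^(m-1)` means
`∑ (-1)^c = 2^m`, and `∑ (-1)^c = (-1)^ε W_a(w)` with `W_a` the Walsh transform of `g_a`. This
never happens for `a = 0`; for `a ≠ 0` it forces `ε = g̃_a(w)`, where the dual bent function is
defined by `W_a(w) = 2^m (-1)^g̃_a(w)`.
So for `a ≠ 0` one counts the `w` with `h_x(w) = h_y(w) = 1`, where
`h_u(w) = g_a(u) + Tr(wu) + g̃_a(w)`. Inclusion-exclusion gives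
`4 · #{…} = 2^(2m) - ∑ (-1)^h_x - ∑ (-1)^h_y + ∑ (-1)^(h_x + h_y)`; Walsh inversion makes the
middle sums `2^m`, and `h_x + h_y = g_a(x) + g_a(y) + Tr(w(x - y))` has character sum `0`.
Hence each of the `2^ℓ - 1` nonzero `a` contributes `2^(2m-2) - 2^(m-1)`.
-/

noncomputable section

open Finset

/-- Definitionally `v ↦ (-1) ^ v.val`, the sign used in `IsBent`. -/
def signChar : AddChar (ZMod 2) ℤ := AddChar.zmodChar 2 (ζ := -1) (by norm_num)

lemma signChar_one : signChar 1 = -1 := rfl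

lemma signChar_mul_self (v : ZMod 2) : signChar v * signChar v = 1 := by
  revert v; decide

lemma signChar_eq_one_iff (v : ZMod 2) : signChar v = 1 ↔ v = 0 := by
  revert v; decide

lemma abs_signChar (v : ZMod 2) : |signChar v| = 1 := by
  revert v; decide

lemma signChar_neg (v : ZMod 2) : signChar (-v) = signChar v := by
  revert v; decide

section Counting

variable {S : Type*} [Fintype S]

lemma sum_signChar_eq_card_sub (c : S → ZMod 2) :
    ∑ s, signChar (c s) = Fintype.card S - 2 * {s | c s ≠ 0}.ncard := by
  classical
  have key : ∀ v : ZMod 2, signChar v = 1 - 2 * if v ≠ 0 then 1 else 0 := by decide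
  simp only [key, sum_sub_distrib, ← mul_sum, sum_const, card_univ, Set.ncard_eq_toFinset_card',
    Set.toFinset_ofPred, natCast_card_filter]
  simp

lemma four_mul_card_filter_eq_one_and_eq_one (u v : S → ZMod 2) :
    4 * (#{s | u s = 1 ∧ v s = 1} : ℤ) = Fintype.card S - ∑ s, signChar (u s)
      - ∑ s, signChar (v s) + ∑ s, signChar (u s + v s) := by
  have key : ∀ a b : ZMod 2, 4 * (if a = 1 ∧ b = 1 then 1 else 0 : ℤ)
      = 1 - signChar a - signChar b + signChar (a + b) := by decide
  simp only [natCast_card_filter, mul_sum, key, sum_add_distrib, sum_sub_distrib]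
  simp

end Counting

section Walsh

variable {F : Type*} [Field F] [Algebra (ZMod 2) F]

local notation "Tr" => Algebra.trace (ZMod 2) F

variable (F) in
def traceChar : AddChar F ℤ :=
  signChar.compAddMonoidHom (Algebra.trace (ZMod 2) F).toAddMonoidHom

lemma traceChar_apply (x : F) : traceChar F x = signChar (Tr x) := rfl

lemma traceChar_sub (a b : F) : traceChar F (a - b) = traceChar F a * traceChar F b := by
  rw [sub_eq_add_neg, AddChar.map_add_eq_mul, traceChar_apply (-b), map_neg, signChar_neg]
  rfl

variable [Fintype F]

lemma traceChar_isPrimitive : (traceChar F).IsPrimitive := by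
  refine AddChar.IsPrimitive.of_ne_one fun h => ?_
  obtain ⟨x, hx⟩ := Algebra.trace_surjective (ZMod 2) F 1
  have hx1 := DFunLike.congr_fun h x
  rw [traceChar_apply, hx, AddChar.one_apply] at hx1
  exact absurd hx1 (by decide)

lemma sum_traceChar_mul [DecidableEq F] (b : F) :
    ∑ w, traceChar F (w * b) = if b = 0 then (Fintype.card F : ℤ) else 0 :=
  mod_cast AddChar.sum_mulShift b traceChar_isPrimitive

def walsh (g : F → ZMod 2) (w : F) : ℤ := ∑ z, signChar (g z + Tr (w * z))

lemma walsh_zero [DecidableEq F] (w : F) :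
    walsh (fun _ => 0) w = if w = 0 then (Fintype.card F : ℤ) else 0 := by
  simp only [walsh, zero_add, mul_comm w]
  exact sum_traceChar_mul w

lemma sum_signChar_add_trace_add (g : F → ZMod 2) (w : F) (ε : ZMod 2) :
    ∑ z, signChar (g z + Tr (w * z) + ε) = walsh g w * signChar ε := by
  simp only [walsh, sum_mul, AddChar.map_add_eq_mul]

lemma sum_signChar_mul_walsh (g : F → ZMod 2) (x : F) :
    ∑ w, signChar (g x + Tr (w * x)) * walsh g w = Fintype.card F := by
  classical
  have expand : ∀ w z, signChar (g x + Tr (w * x)) * signChar (g z + Tr (w * z))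
      = signChar (g x) * signChar (g z) * traceChar F (w * (x - z)) := by
    intro w z
    rw [mul_sub, traceChar_sub, traceChar_apply, traceChar_apply]
    simp only [AddChar.map_add_eq_mul]
    ring
  simp only [walsh, mul_sum, expand]
  rw [sum_comm]
  simp only [← mul_sum, sum_traceChar_mul, sub_eq_zero, mul_ite, mul_zero]
  rw [sum_ite_eq, if_pos (mem_univ x), signChar_mul_self, one_mul]

lemma exists_walsh_eq_mul_signChar {g : F → ZMod 2} {r : ℤ} (hW : ∀ w, |walsh g w| = r) :
    ∃ d : F → ZMod 2, ∀ w, walsh g w = r * signChar (d w) :=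
  Classical.skolem.mp fun w => show ∃ e, walsh g w = r * signChar e from
    (abs_choice (walsh g w)).elim
      (fun h => ⟨0, by rw [← hW w, h]; simp⟩)
      (fun h => ⟨1, by rw [← hW w, h, signChar_one, mul_neg_one, neg_neg]⟩)

lemma sum_signChar_add_trace_add_eq_of_walsh_eq {g d : F → ZMod 2} {r : ℤ} (hr : r ≠ 0)
    (hd : ∀ w, walsh g w = r * signChar (d w)) (hcard : (Fintype.card F : ℤ) = r ^ 2) (u : F) :
    ∑ w, signChar (g u + Tr (w * u) + d w) = r := by
  refine mul_left_cancel₀ hr ?_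
  rw [← sq, ← hcard, ← sum_signChar_mul_walsh g u, mul_sum]
  refine sum_congr rfl fun w _ => ?_
  rw [hd, AddChar.map_add_eq_mul]
  ring

lemma sum_signChar_add_add_trace_eq_zero (g d : F → ZMod 2) {x y : F} (hxy : x ≠ y) :
    ∑ w, signChar (g x + Tr (w * x) + d w + (g y + Tr (w * y) + d w)) = 0 := by
  classical
  have expand : ∀ w, signChar (g x + Tr (w * x) + d w + (g y + Tr (w * y) + d w))
      = signChar (g x) * signChar (g y) * traceChar F (w * (x - y)) := by
    intro w
    rw [mul_sub, traceChar_sub, traceChar_apply, traceChar_apply]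
    simp only [AddChar.map_add_eq_mul]
    linear_combination (signChar (g x) * signChar (Tr (w * x)) * signChar (g y)
      * signChar (Tr (w * y))) * signChar_mul_self (d w)
  simp only [expand, ← mul_sum, sum_traceChar_mul, if_neg (sub_ne_zero.mpr hxy), mul_zero]

lemma four_mul_card_filter_of_abs_walsh_eq (g : F → ZMod 2) {r : ℤ} (hr : r ≠ 0)
    (hW : ∀ w, |walsh g w| = r) (hcard : (Fintype.card F : ℤ) = r ^ 2) {x y : F} (hxy : x ≠ y) :
    4 * (#{q : F × ZMod 2 | ∑ z, signChar (g z + Tr (q.1 * z) + q.2) = r ∧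
        g x + Tr (q.1 * x) + q.2 = 1 ∧ g y + Tr (q.1 * y) + q.2 = 1} : ℤ)
      = r ^ 2 - 2 * r := by
  classical
  obtain ⟨d, hd⟩ := exists_walsh_eq_mul_signChar hW
  -- the weight condition forces `ε` to be the dual function `d w`
  have hweight : ∀ w ε, ∑ z, signChar (g z + Tr (w * z) + ε) = r ↔ ε = d w := by
    intro w ε
    rw [sum_signChar_add_trace_add, hd, mul_assoc, ← AddChar.map_add_eq_mul, mul_eq_left₀ hr,
      signChar_eq_one_iff, add_comm, CharTwo.add_eq_zero, eq_comm]
  have hfilter : ({q : F × ZMod 2 | ∑ z, signChar (g z + Tr (q.1 * z) + q.2) = r ∧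
        g x + Tr (q.1 * x) + q.2 = 1 ∧ g y + Tr (q.1 * y) + q.2 = 1} : Finset _)
      = ({w | g x + Tr (w * x) + d w = 1 ∧ g y + Tr (w * y) + d w = 1} : Finset F).image
          fun w => (w, d w) := by
    ext ⟨w, ε⟩
    simp only [mem_filter, mem_univ, true_and, mem_image, Prod.mk.injEq, hweight]
    constructor
    · rintro ⟨rfl, hx, hy⟩
      exact ⟨w, ⟨hx, hy⟩, rfl, rfl⟩
    · rintro ⟨w, ⟨hx, hy⟩, rfl, rfl⟩
      exact ⟨rfl, hx, hy⟩
  rw [hfilter, card_image_of_injective _ fun _ _ e => congrArg Prod.fst e,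
    four_mul_card_filter_eq_one_and_eq_one,
    sum_signChar_add_trace_add_eq_of_walsh_eq hr hd hcard,
    sum_signChar_add_trace_add_eq_of_walsh_eq hr hd hcard,
    sum_signChar_add_add_trace_eq_zero g d hxy, hcard]
  ring

end Walsh

section Codeword

variable {F : Type*} [Field F] [Algebra (ZMod 2) F] {ℓ : ℕ}

def codeword (f : Fin ℓ → F → ZMod 2) :
    ((Fin ℓ → ZMod 2) × F × ZMod 2) →ₗ[ZMod 2] F → ZMod 2 where
  toFun p z := ∑ j, p.1 j * f j z + Algebra.trace (ZMod 2) F (p.2.1 * z) + p.2.2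
  map_add' p q := by
    ext z
    simp only [Prod.fst_add, Prod.snd_add, Pi.add_apply, add_mul, map_add, sum_add_distrib]
    ring
  map_smul' a p := by
    ext z
    simp only [Prod.smul_fst, Prod.smul_snd, Pi.smul_apply, smul_eq_mul, smul_mul_assoc, map_smul,
      RingHom.id_apply, mul_add, mul_sum, mul_assoc]

lemma codeword_apply (f : Fin ℓ → F → ZMod 2) (p : (Fin ℓ → ZMod 2) × F × ZMod 2) (z : F) :
    codeword f p z = ∑ j, p.1 j * f j z + Algebra.trace (ZMod 2) F (p.2.1 * z) + p.2.2 :=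
  rfl

lemma sum_signChar_codeword [Fintype F] (f : Fin ℓ → F → ZMod 2) (a : Fin ℓ → ZMod 2) (w : F)
    (ε : ZMod 2) :
    ∑ z, signChar (codeword f (a, w, ε) z) = walsh (fun z => ∑ j, a j * f j z) w * signChar ε :=
  sum_signChar_add_trace_add _ w ε

end Codeword

section BentCode

variable {m ℓ : ℕ}

lemma card_galoisField_two {n : ℕ} (hn : n ≠ 0) : Fintype.card (GaloisField 2 n) = 2 ^ n := by
  rw [← Nat.card_eq_fintype_card]
  exact GaloisField.card 2 n hn

lemma IsBentVectorial.abs_walsh {f : Fin ℓ → GaloisField 2 (2*m) → ZMod 2}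
    (hf : IsBentVectorial m ℓ f) {a : Fin ℓ → ZMod 2} (ha : a ≠ 0) (w : GaloisField 2 (2*m)) :
    |walsh (fun z => ∑ j, a j * f j z) w| = 2 ^ m :=
  hf a ha w

lemma code_eq_range (f : Fin ℓ → GaloisField 2 (2*m) → ZMod 2) :
    code m ℓ f = LinearMap.range (codeword f) := by
  refine le_antisymm (Submodule.span_le.mpr ?_) ?_
  · rintro _ ((⟨j, rfl⟩ | ⟨w, rfl⟩) | rfl)
    · exact ⟨(Pi.single j 1, 0, 0), by ext z; simp [codeword, Pi.single_apply]⟩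
    · exact ⟨(0, w, 0), by ext z; simp [codeword, tr]⟩
    · exact ⟨(0, 0, 1), by ext z; simp [codeword]⟩
  · rintro _ ⟨⟨a, w, ε⟩, rfl⟩
    have hc : codeword f (a, w, ε)
        = ∑ j, a j • f j + (fun z => tr m (w * z)) + ε • fun _ => (1 : ZMod 2) := by
      ext z
      simp [codeword, tr, Finset.sum_apply]
    rw [hc]
    refine add_mem (add_mem (sum_mem fun j _ => Submodule.smul_mem _ _ ?_) ?_)
      (Submodule.smul_mem _ _ ?_) <;> apply Submodule.subset_span
    · exact .inl (.inl ⟨j, rfl⟩)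
    · exact .inl (.inr ⟨w, rfl⟩)
    · exact .inr rfl

lemma codeword_injective (hm : m ≠ 0) {f : Fin ℓ → GaloisField 2 (2*m) → ZMod 2}
    (hf : IsBentVectorial m ℓ f) : Function.Injective (codeword f) := by
  classical
  have hcard := card_galoisField_two (show 2 * m ≠ 0 by omega)
  have hlt : (2 : ℤ) ^ m < 2 ^ (2 * m) := pow_lt_pow_right₀ (by norm_num) (by omega)
  refine (injective_iff_map_eq_zero _).mpr fun ⟨a, w, ε⟩ h => ?_
  have hsum := sum_signChar_codeword f a w ε
  simp only [h, Pi.zero_apply, AddChar.map_zero_eq_one, sum_const, card_univ, hcard,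
    nsmul_eq_mul, mul_one] at hsum
  by_cases ha : a = 0
  · subst ha
    simp only [Pi.zero_apply, zero_mul, sum_const_zero, walsh_zero, hcard] at hsum
    by_cases hw : w = 0
    · rw [if_pos hw, eq_comm, mul_eq_left₀ (by positivity), signChar_eq_one_iff] at hsum
      rw [hw, hsum]
      rfl
    · rw [if_neg hw, zero_mul] at hsum
      exact absurd hsum (by positivity)
  · have hW := congrArg abs hsum
    rw [abs_mul, abs_signChar, mul_one, hf.abs_walsh ha w] at hW
    rw [Nat.cast_pow, Nat.cast_ofNat, abs_of_pos (by positivity)] at hW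
    exact absurd hW hlt.ne'

lemma wt_eq_iff (hm : m ≠ 0) (c : GaloisField 2 (2*m) → ZMod 2) :
    wt m c = 2 ^ (2*m-1) - 2 ^ (m-1) ↔ ∑ z, signChar (c z) = 2 ^ m := by
  rw [sum_signChar_eq_card_sub, card_galoisField_two (by omega), ← wt]
  generalize wt m c = N
  have hcard : 2 ^ (2 * m) = 2 * 2 ^ (2 * m - 1) := by rw [← pow_succ']; congr 1; omega
  have hhalf : 2 ^ m = 2 * 2 ^ (m - 1) := by rw [← pow_succ']; congr 1; omega
  have hle : 2 ^ (m - 1) ≤ 2 ^ (2 * m - 1) := Nat.pow_le_pow_right (by norm_num) (by omega)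
  rw [show (2 : ℤ) ^ m = (2 ^ m : ℕ) by norm_cast, hcard, hhalf]
  omega

lemma sum_signChar_codeword_zero_ne (hm : m ≠ 0) (f : Fin ℓ → GaloisField 2 (2*m) → ZMod 2)
    (w : GaloisField 2 (2*m)) (ε : ZMod 2) :
    ∑ z, signChar (codeword f (0, w, ε) z) ≠ 2 ^ m := by
  classical
  intro h
  simp only [sum_signChar_codeword, Pi.zero_apply, zero_mul, sum_const_zero, walsh_zero,
    card_galoisField_two (show 2 * m ≠ 0 by omega)] at h
  split_ifs at h
  · have habs := congrArg abs h
    rw [abs_mul, abs_signChar, mul_one, abs_of_pos (by positivity), abs_of_pos (by positivity)]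
      at habs
    push_cast at habs
    exact absurd habs (pow_lt_pow_right₀ (by norm_num) (by omega)).ne'
  · rw [zero_mul] at h
    exact absurd h.symm (by positivity)

lemma card_filter_codeword (hm : m ≠ 0) {f : Fin ℓ → GaloisField 2 (2*m) → ZMod 2}
    (hf : IsBentVectorial m ℓ f) {a : Fin ℓ → ZMod 2} (ha : a ≠ 0) {x y : GaloisField 2 (2*m)}
    (hxy : x ≠ y) :
    #{q | wt m (codeword f (a, q)) = 2 ^ (2*m-1) - 2 ^ (m-1) ∧
      codeword f (a, q) x = 1 ∧ codeword f (a, q) y = 1} = 2 ^ (2*m-2) - 2 ^ (m-1) := by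
  have solve : ∀ N : ℕ, 4 * (N : ℤ) = (2 ^ m) ^ 2 - 2 * 2 ^ m → N = 2 ^ (2*m-2) - 2 ^ (m-1) := by
    obtain ⟨k, rfl⟩ : ∃ k, m = k + 1 := Nat.exists_eq_add_one.mpr (Nat.pos_of_ne_zero hm)
    intro N hN
    rw [show 2 * (k + 1) - 2 = 2 * k by omega, Nat.add_sub_cancel, pow_mul']
    have hle : 2 ^ k ≤ (2 ^ k) ^ 2 := Nat.le_self_pow two_ne_zero _
    zify [hle]
    rw [pow_succ (2 : ℤ) k] at hN
    linarith
  have h4 := four_mul_card_filter_of_abs_walsh_eq _ (by positivity) (hf.abs_walsh ha)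
    (by rw [card_galoisField_two (by omega)]; push_cast; ring) hxy
  simp only [wt_eq_iff hm, codeword_apply]
  exact solve _ h4

end BentCode

theorem stmt_1_general (m ℓ : ℕ) (hm : 2 ≤ m)
    (f : Fin ℓ → GaloisField 2 (2*m) → ZMod 2) (hf : IsBentVectorial m ℓ f) :
    ∀ x y : GaloisField 2 (2*m), x ≠ y →
      {c | c ∈ code m ℓ f ∧ wt m c = 2^(2*m-1) - 2^(m-1) ∧ c x = 1 ∧ c y = 1}.ncard =
        (2^ℓ - 1) * (2^(2*m-2) - 2^(m-1)) := by
  classical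
  intro x y hxy
  set P : (GaloisField 2 (2*m) → ZMod 2) → Prop :=
    fun c => wt m c = 2^(2*m-1) - 2^(m-1) ∧ c x = 1 ∧ c y = 1
  have hcount : ∀ a, #{q | P (codeword f (a, q))}
      = if a = 0 then 0 else 2^(2*m-2) - 2^(m-1) := by
    intro a
    split_ifs with ha
    · refine card_eq_zero.mpr (filter_eq_empty_iff.mpr fun ⟨w, ε⟩ _ ⟨hwt, _⟩ => ?_)
      rw [ha, wt_eq_iff (by omega)] at hwt
      exact sum_signChar_codeword_zero_ne (by omega) f w ε hwt
    · exact card_filter_codeword (by omega) hf ha hxy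
  calc {c | c ∈ code m ℓ f ∧ P c}.ncard
      = (codeword f ⁻¹' {c | P c}).ncard := by
        rw [code_eq_range, ← Set.ncard_image_of_injective _ (codeword_injective (by omega) hf),
          Set.image_preimage_eq_range_inter]
        rfl
    _ = ∑ a, #{q | P (codeword f (a, q))} := by
        rw [Set.ncard_eq_toFinset_card', Set.preimage_ofPred_eq, Set.toFinset_ofPred, card_filter,
          Fintype.sum_prod_type]
        simp only [card_filter]
    _ = (2^ℓ - 1) * (2^(2*m-2) - 2^(m-1)) := by
        simp only [hcount, sum_ite, sum_const_zero, sum_const, filter_ne',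
          card_erase_of_mem (mem_univ _), card_univ, Fintype.card_fun, ZMod.card, Fintype.card_fin,
          smul_eq_mul, zero_add]

/-- the minimum weight codewords of `C(f_1, …, f_ℓ)` hold a
`2-(2^(2m), 2^(2m-1) - 2^(m-1), (2^ℓ-1)(2^(2m-2) - 2^(m-1)))` design. -/
theorem stmt_1 (m ℓ : ℕ) (hm : 2 ≤ m) (hℓ1 : 1 ≤ ℓ) (hℓm : ℓ ≤ m)
    (f : Fin ℓ → GaloisField 2 (2*m) → ZMod 2) (hf : IsBentVectorial m ℓ f) :
    ∀ x y : GaloisField 2 (2*m), x ≠ y →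
      {c | c ∈ code m ℓ f ∧ wt m c = 2^(2*m-1) - 2^(m-1) ∧ c x = 1 ∧ c y = 1}.ncard =
        (2^ℓ - 1) * (2^(2*m-2) - 2^(m-1)) :=
  stmt_1_general m ℓ hm f hf
end
end

section
/- Let m ≥ 2 and let f be a bent function from GF(2^{2m}) to GF(2). Then the supports of the codewords of Hamming weight 2^{2m−1} − 2^{m−1} of the code C(f) form a symmetric 2-(2^{2m}, 2^{2m−1} − 2^{m−1}, 2^{2m−2} − 2^{m−1}) design: there are exactly 2^{2m} such codewords, their supports are pairwise distinct, every pair of distinct elements of GF(2^{2m}) lies in exactly 2^{2m−2} − 2^{m−1} of these supports, and any two distinct such supports intersect in exactly 2^{2m−2} − 2^{m−1} elements. -/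
noncomputable section

namespace Stmt3Aux
open scoped Classical

/-- The sign character on `ZMod 2`. -/
def χ (a : ZMod 2) : ℤ := (-1) ^ a.val

lemma zmod2_cases (a : ZMod 2) : a = 0 ∨ a = 1 := by
  have h := ZMod.val_lt a
  have h2 : a.val = 0 ∨ a.val = 1 := by omega
  rcases h2 with h2 | h2
  · exact Or.inl ((ZMod.val_eq_zero a).mp h2)
  · right
    calc a = (a.val : ZMod 2) := (ZMod.natCast_zmod_val a).symm
    _ = 1 := by rw [h2]; norm_num

lemma χ_zero : χ 0 = 1 := rfl

lemma χ_one : χ 1 = -1 := rfl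

lemma two_zero : (1 + 1 : ZMod 2) = 0 := by decide

lemma χ_add (a b : ZMod 2) : χ (a + b) = χ a * χ b := by
  rcases zmod2_cases a with ha | ha <;> rcases zmod2_cases b with hb | hb <;>
    subst ha <;> subst hb <;>
    simp only [add_zero, zero_add, two_zero, χ_zero, χ_one] <;> ring

lemma χ_inj {a b : ZMod 2} (h : χ a = χ b) : a = b := by
  rcases zmod2_cases a with ha | ha <;> rcases zmod2_cases b with hb | hb <;>
    subst ha <;> subst hb <;> simp_all [χ_zero, χ_one] <;> omega

variable (m : ℕ)

set_option synthInstance.maxHeartbeats 1000000 in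
instance : Algebra.IsSeparable (ZMod 2) (GaloisField 2 (2*m)) := inferInstance

lemma tr_add (x y : GaloisField 2 (2*m)) : tr m (x + y) = tr m x + tr m y := by
  unfold tr; exact map_add _ x y

lemma tr_zero : tr m 0 = 0 := by unfold tr; exact map_zero _

lemma card_F (hm : m ≠ 0) : Fintype.card (GaloisField 2 (2*m)) = 2^(2*m) := by
  rw [← Nat.card_eq_fintype_card]
  exact GaloisField.card 2 (2*m) (by omega)

/-- Nondegeneracy of the trace. -/
lemma tr_nondeg {u : GaloisField 2 (2*m)} (hu : u ≠ 0) : ∃ x, tr m (u * x) ≠ 0 := by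
  have h := Algebra.trace_ne_zero (ZMod 2) (GaloisField 2 (2*m))
  rw [DFunLike.ne_iff] at h
  obtain ⟨z, hz⟩ := h
  exact ⟨u⁻¹ * z, by rwa [← mul_assoc, mul_inv_cancel₀ hu, one_mul]⟩

/-- The fundamental character sum. -/
lemma sum_chi (hm : m ≠ 0) (u : GaloisField 2 (2*m)) :
    ∑ x : GaloisField 2 (2*m), χ (tr m (u * x)) = if u = 0 then (2:ℤ)^(2*m) else 0 := by
  classical
  split_ifs with h
  · subst h
    simp only [zero_mul, tr_zero, χ_zero]
    rw [Finset.sum_const, Finset.card_univ, card_F m hm]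
    push_cast; ring
  · obtain ⟨x₀, hx₀⟩ := tr_nondeg m h
    have hx₀1 : tr m (u * x₀) = 1 := (zmod2_cases _).resolve_left hx₀
    have key : ∑ x : GaloisField 2 (2*m), χ (tr m (u * x))
        = ∑ x : GaloisField 2 (2*m), χ (tr m (u * (x + x₀))) :=
      (Fintype.sum_equiv (Equiv.addRight x₀) _ _ (fun x => rfl)).symm
    have key2 : ∀ x : GaloisField 2 (2*m), χ (tr m (u * (x + x₀))) = - χ (tr m (u * x)) := by
      intro x
      rw [mul_add, tr_add, χ_add, hx₀1, χ_one]
      ring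
    rw [Finset.sum_congr rfl (fun x _ => key2 x), Finset.sum_neg_distrib] at key
    linarith

/-- The weight-versus-sum identity. -/
lemma wt_eq_iff (hm : m ≠ 0) (c : GaloisField 2 (2*m) → ZMod 2) (N : ℕ) :
    wt m c = N ↔ ∑ x : GaloisField 2 (2*m), χ (c x) = 2^(2*m) - 2*N := by
  have hwt : (wt m c : ℤ) * 2 = 2^(2*m) - ∑ x : GaloisField 2 (2*m), χ (c x) := by
    have h1 : wt m c = (Finset.univ.filter (fun x => c x ≠ 0)).card := by
      rw [wt, ← Set.ncard_coe_finset]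
      congr 1
      ext x
      simp
    have h2 : ∀ x : GaloisField 2 (2*m), χ (c x) = 1 - 2 * (if c x ≠ 0 then (1:ℤ) else 0) := by
      intro x
      rcases zmod2_cases (c x) with h | h <;> rw [h] <;> simp [χ_zero, χ_one]
    rw [Finset.sum_congr rfl (fun x _ => h2 x), Finset.sum_sub_distrib,
      ← Finset.mul_sum, Finset.sum_boole, Finset.sum_const, Finset.card_univ, card_F m hm, h1]
    push_cast
    ring
  constructor
  · intro h; rw [h] at hwt; linarith
  · intro h; rw [h] at hwt
    have : (wt m c : ℤ) = N := by linarith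
    exact_mod_cast this


section Bent

variable (f : GaloisField 2 (2*m) → ZMod 2)

/-- The Walsh transform. -/
def W (w : GaloisField 2 (2*m)) : ℤ := ∑ x : GaloisField 2 (2*m), χ (f x + tr m (w * x))

lemma W_pm (hf : IsBent m f) (w : GaloisField 2 (2*m)) :
    W m f w = 2^m ∨ W m f w = -(2^m) := by
  have h := hf w
  have : |W m f w| = 2^m := h
  rcases abs_eq (by positivity : (0:ℤ) ≤ 2^m) |>.mp this with h' | h'
  · exact Or.inl h'
  · exact Or.inr h'

/-- The dual sign choice. -/
def δ (w : GaloisField 2 (2*m)) : ZMod 2 := if W m f w = 2^m then 0 else 1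

lemma W_eq_δ (hf : IsBent m f) (w : GaloisField 2 (2*m)) :
    W m f w = 2^m * χ (δ m f w) := by
  unfold δ
  rcases W_pm m f hf w with h | h
  · rw [if_pos h, χ_zero, mul_one, h]
  · have hne : W m f w ≠ 2^m := by
      rw [h]; have : (0:ℤ) < 2^m := by positivity
      omega
    rw [if_neg hne, χ_one, h]; ring

/-- The minimum weight codewords. -/
def cw (w : GaloisField 2 (2*m)) : GaloisField 2 (2*m) → ZMod 2 :=
  fun x => f x + tr m (w * x) + δ m f w

lemma sum_chi_cw (hf : IsBent m f) (w : GaloisField 2 (2*m)) :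
    ∑ x : GaloisField 2 (2*m), χ (cw m f w x) = 2^m := by
  have h : ∀ x, χ (cw m f w x) = χ (f x + tr m (w * x)) * χ (δ m f w) := by
    intro x; rw [cw, χ_add]
  rw [Finset.sum_congr rfl (fun x _ => h x), ← Finset.sum_mul]
  have : (∑ x : GaloisField 2 (2*m), χ (f x + tr m (w * x))) = W m f w := rfl
  rw [this, W_eq_δ m f hf w]
  have hχ : χ (δ m f w) * χ (δ m f w) = 1 := by
    rcases zmod2_cases (δ m f w) with h | h <;> rw [h] <;> simp [χ_zero, χ_one]
  rw [mul_assoc, hχ, mul_one]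

/-- The duality identity. -/
lemma dual_sum (hm : m ≠ 0) (hf : IsBent m f) (x : GaloisField 2 (2*m)) :
    ∑ w : GaloisField 2 (2*m), χ (δ m f w) * χ (tr m (w * x)) = 2^m * χ (f x) := by
  have key : ∑ w : GaloisField 2 (2*m), W m f w * χ (tr m (w * x))
      = 2^(2*m) * χ (f x) := by
    have expand : ∀ w : GaloisField 2 (2*m), W m f w * χ (tr m (w * x))
        = ∑ y : GaloisField 2 (2*m), χ (f y) * χ (tr m ((y + x) * w)) := by
      intro w
      rw [W, Finset.sum_mul]
      refine Finset.sum_congr rfl (fun y _ => ?_)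
      rw [χ_add, mul_assoc, ← χ_add, ← tr_add, ← mul_add, mul_comm w (y + x)]
    rw [Finset.sum_congr rfl (fun w _ => expand w), Finset.sum_comm]
    have inner : ∀ y : GaloisField 2 (2*m),
        (∑ w : GaloisField 2 (2*m), χ (f y) * χ (tr m ((y + x) * w)))
        = χ (f y) * (if y + x = 0 then (2:ℤ)^(2*m) else 0) := by
      intro y
      rw [← Finset.mul_sum, sum_chi m hm (y + x)]
    rw [Finset.sum_congr rfl (fun y _ => inner y)]
    have hyx : ∀ y : GaloisField 2 (2*m), y + x = 0 ↔ y = x := by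
      intro y
      rw [← CharTwo.sub_eq_add, sub_eq_zero]
    rw [Finset.sum_congr rfl (fun y _ => by rw [if_congr (hyx y) rfl rfl])]
    simp only [mul_ite, mul_zero, Finset.sum_ite_eq', Finset.mem_univ, if_true]
    ring
  have key2 : ∑ w : GaloisField 2 (2*m), W m f w * χ (tr m (w * x))
      = 2^m * ∑ w : GaloisField 2 (2*m), χ (δ m f w) * χ (tr m (w * x)) := by
    rw [Finset.mul_sum]
    refine Finset.sum_congr rfl (fun w _ => ?_)
    rw [W_eq_δ m f hf w]; ring
  rw [key2] at key
  have h2m : (2:ℤ)^(2*m) = 2^m * 2^m := by rw [← pow_add]; ring_nf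
  rw [h2m, mul_assoc] at key
  exact mul_left_cancel₀ (by positivity) key


lemma χ_sq (a : ZMod 2) : χ a * χ a = 1 := by
  rcases zmod2_cases a with h | h <;> rw [h] <;> simp [χ_zero, χ_one]

lemma zmod2_add_eq_zero {a b : ZMod 2} (h : a + b = 0) : a = b := by
  rcases zmod2_cases a with ha | ha <;> rcases zmod2_cases b with hb | hb <;>
    subst ha <;> subst hb <;> first | rfl | simp_all | exact (by decide : (1:ZMod 2)+0 ≠ 0) h |>.elim

lemma code_mem_iff (c : GaloisField 2 (2*m) → ZMod 2) :
    c ∈ code m 1 (fun _ => f) ↔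
      ∃ ε d : ZMod 2, ∃ w, c = fun x => ε * f x + tr m (w * x) + d := by
  constructor
  · intro hc
    let S : Submodule (ZMod 2) (GaloisField 2 (2*m) → ZMod 2) :=
      { carrier := {c | ∃ ε d : ZMod 2, ∃ w, c = fun x => ε * f x + tr m (w * x) + d}
        add_mem' := by
          rintro a b ⟨ε, d, w, rfl⟩ ⟨ε', d', w', rfl⟩
          refine ⟨ε + ε', d + d', w + w', ?_⟩
          funext x
          show (ε * f x + tr m (w * x) + d) + (ε' * f x + tr m (w' * x) + d') = _
          rw [add_mul w w' x, tr_add]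
          ring
        zero_mem' := ⟨0, 0, 0, by funext x; simp [tr_zero]⟩
        smul_mem' := by
          rintro a c hc
          rcases zmod2_cases a with h | h
          · subst h
            rw [zero_smul]
            exact ⟨0, 0, 0, by funext x; simp [tr_zero]⟩
          · subst h
            rwa [one_smul] }
    have hle : code m 1 (fun _ => f) ≤ S := by
      rw [code, Submodule.span_le]
      rintro g ((hg | hg) | hg)
      · obtain ⟨j, rfl⟩ := hg
        exact ⟨1, 0, 0, by funext x; simp [tr_zero]⟩
      · obtain ⟨w, rfl⟩ := hg
        exact ⟨0, 0, w, by funext x; simp⟩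
      · rw [Set.mem_singleton_iff] at hg; subst hg
        exact ⟨0, 1, 0, by funext x; simp [tr_zero]⟩
    exact hle hc
  · rintro ⟨ε, d, w, rfl⟩
    have hf' : f ∈ code m 1 (fun _ => f) :=
      Submodule.subset_span (Or.inl (Or.inl ⟨0, rfl⟩))
    have ht : (fun x => tr m (w * x)) ∈ code m 1 (fun _ => f) :=
      Submodule.subset_span (Or.inl (Or.inr ⟨w, rfl⟩))
    have h1 : (fun _ => (1:ZMod 2)) ∈ code m 1 (fun _ => f) :=
      Submodule.subset_span (Or.inr rfl)
    have hmem := Submodule.add_mem _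
      (Submodule.add_mem _ (Submodule.smul_mem _ ε hf') ht) (Submodule.smul_mem _ d h1)
    convert hmem using 1
    funext x
    simp [Pi.smul_apply, smul_eq_mul]

lemma cw_mem (w : GaloisField 2 (2*m)) : cw m f w ∈ code m 1 (fun _ => f) := by
  rw [code_mem_iff]
  exact ⟨1, δ m f w, w, by funext x; rw [cw]; ring⟩

lemma cw_inj (hm : m ≠ 0) : Function.Injective (cw m f) := by
  intro w w' h
  by_contra hne
  have hδ : δ m f w = δ m f w' := by
    have h0 := congrFun h 0
    simp only [cw, mul_zero, tr_zero] at h0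
    exact add_left_cancel h0
  have htr : ∀ x, tr m (w * x) = tr m (w' * x) := by
    intro x
    have hx := congrFun h x
    simp only [cw, hδ] at hx
    exact add_left_cancel (add_right_cancel hx)
  have hu : (w - w') ≠ 0 := sub_ne_zero.mpr hne
  obtain ⟨x, hx⟩ := tr_nondeg m hu
  apply hx
  have : (w - w') * x = w * x - w' * x := sub_mul w w' x
  rw [this]
  show Algebra.trace (ZMod 2) _ _ = 0
  rw [map_sub]
  have := htr x
  unfold tr at this
  rw [this, sub_self]

/-- Integer value of the min weight. -/
lemma hKint (hm2 : 2 ≤ m) :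
    (2:ℤ)^(2*m) - 2*((2^(2*m-1) - 2^(m-1) : ℕ) : ℤ) = 2^m := by
  have hle : (2:ℕ)^(m-1) ≤ 2^(2*m-1) := Nat.pow_le_pow_right (by norm_num) (by omega)
  rw [Nat.cast_sub hle]
  push_cast
  have h1 : (2:ℤ)^(2*m) = 2 * 2^(2*m-1) := by
    rw [← pow_succ']; congr 1; omega
  have h2 : (2:ℤ)^m = 2 * 2^(m-1) := by
    rw [← pow_succ']; congr 1; omega
  rw [h1, h2]; ring

lemma hNint (hm2 : 2 ≤ m) :
    (4:ℤ) * ((2^(2*m-2) - 2^(m-1) : ℕ) : ℤ) = 2^(2*m) - 2^m - 2^m := by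
  have hle : (2:ℕ)^(m-1) ≤ 2^(2*m-2) := Nat.pow_le_pow_right (by norm_num) (by omega)
  rw [Nat.cast_sub hle]
  push_cast
  have h1 : (2:ℤ)^(2*m) = 4 * 2^(2*m-2) := by
    have e : (4:ℤ) * 2^(2*m-2) = 2^(2*m-2+2) := by rw [pow_add]; ring
    rw [e]; congr 1; omega
  have h2 : (2:ℤ)^m = 2 * 2^(m-1) := by
    rw [← pow_succ']; congr 1; omega
  rw [h1, h2]; ring

lemma minwt_iff (hm2 : 2 ≤ m) (hf : IsBent m f) (c : GaloisField 2 (2*m) → ZMod 2) :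
    (c ∈ code m 1 (fun _ => f) ∧ wt m c = 2^(2*m-1) - 2^(m-1)) ↔ ∃ w, c = cw m f w := by
  have hm : m ≠ 0 := by omega
  constructor
  · rintro ⟨hc, hwc⟩
    rw [wt_eq_iff m hm c _, hKint m hm2] at hwc
    obtain ⟨ε, d, w, rfl⟩ := (code_mem_iff m f c).mp hc
    rcases zmod2_cases ε with hε | hε
    · exfalso
      subst hε
      have heq : ∀ x : GaloisField 2 (2*m),
          χ ((0:ZMod 2) * f x + tr m (w * x) + d) = χ (tr m (w * x)) * χ d := by
        intro x; rw [zero_mul, zero_add, χ_add]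
      rw [Finset.sum_congr rfl (fun x _ => heq x), ← Finset.sum_mul, sum_chi m hm w] at hwc
      have h2m : (0:ℤ) < 2^m := by positivity
      have h2mlt : (2:ℤ)^m < 2^(2*m) := by
        apply pow_lt_pow_right₀ (by norm_num) (by omega)
      have h2m2 : (0:ℤ) < 2^(2*m) := by positivity
      rcases zmod2_cases d with hd | hd <;> subst hd <;>
        simp only [χ_zero, χ_one] at hwc <;>
        split_ifs at hwc <;> linarith
    · subst hε
      have heq : ∀ x : GaloisField 2 (2*m),
          χ ((1:ZMod 2) * f x + tr m (w * x) + d) = χ (f x + tr m (w * x)) * χ d := by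
        intro x; rw [one_mul, χ_add]
      rw [Finset.sum_congr rfl (fun x _ => heq x), ← Finset.sum_mul] at hwc
      have hW : W m f w * χ d = 2^m := hwc
      rw [W_eq_δ m f hf w, mul_assoc] at hW
      have h2m : (0:ℤ) < 2^m := by positivity
      have hχχ : χ (δ m f w) * χ d = 1 := by
        have h1 : (2:ℤ)^m * (χ (δ m f w) * χ d) = 2^m * 1 := by rw [mul_one]; exact hW
        exact mul_left_cancel₀ (ne_of_gt h2m) h1
      have hd : d = δ m f w := by
        rw [← χ_add] at hχχ
        have : δ m f w + d = 0 := χ_inj (by rw [hχχ, χ_zero])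
        exact (zmod2_add_eq_zero this).symm
      subst hd
      exact ⟨w, by funext x; rw [cw]; ring⟩
  · rintro ⟨w, rfl⟩
    refine ⟨cw_mem m f w, ?_⟩
    rw [wt_eq_iff m hm _ _, hKint m hm2]
    exact sum_chi_cw m f hf w

/-- The generic 4-count lemma. -/
lemma fourcount (hm : m ≠ 0) (g h : GaloisField 2 (2*m) → ZMod 2) :
    4 * ((Finset.univ.filter (fun z : GaloisField 2 (2*m) => g z ≠ 0 ∧ h z ≠ 0)).card : ℤ)
    = 2^(2*m) - (∑ z : GaloisField 2 (2*m), χ (g z)) - (∑ z : GaloisField 2 (2*m), χ (h z))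
      + ∑ z : GaloisField 2 (2*m), χ (g z + h z) := by
  have pt : ∀ a b : ZMod 2, (if a ≠ 0 ∧ b ≠ 0 then (4:ℤ) else 0)
      = 1 - χ a - χ b + χ (a + b) := by
    intro a b
    rcases zmod2_cases a with ha | ha <;> rcases zmod2_cases b with hb | hb <;>
      subst ha <;> subst hb <;>
      simp only [add_zero, zero_add, two_zero, χ_zero, χ_one] <;> norm_num
  have lhs : (∑ z : GaloisField 2 (2*m),
      if g z ≠ 0 ∧ h z ≠ 0 then (4:ℤ) else 0)
      = 4 * ((Finset.univ.filter (fun z : GaloisField 2 (2*m) => g z ≠ 0 ∧ h z ≠ 0)).card : ℤ) := by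
    rw [← Finset.sum_filter, Finset.sum_const, nsmul_eq_mul]
    ring
  rw [← lhs, Finset.sum_congr rfl (fun z _ => pt (g z) (h z))]
  rw [Finset.sum_add_distrib, Finset.sum_sub_distrib, Finset.sum_sub_distrib,
    Finset.sum_const, Finset.card_univ, card_F m hm]
  push_cast
  ring

end Bent

end Stmt3Aux

open Stmt3Aux

/-- for a single bent function `f`, the supports of the minimum
weight codewords of `C(f)` form a symmetric
`2-(2^(2m), 2^(2m-1) - 2^(m-1), 2^(2m-2) - 2^(m-1))` design. -/
theorem stmt_3 (m : ℕ) (hm : 2 ≤ m)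
    (f : GaloisField 2 (2*m) → ZMod 2) (hf : IsBent m f) :
    ({c | c ∈ code m 1 (fun _ => f) ∧ wt m c = 2^(2*m-1) - 2^(m-1)}.ncard = 2^(2*m)) ∧
    (∀ c c' : GaloisField 2 (2*m) → ZMod 2,
      c ∈ code m 1 (fun _ => f) → c' ∈ code m 1 (fun _ => f) →
      wt m c = 2^(2*m-1) - 2^(m-1) → wt m c' = 2^(2*m-1) - 2^(m-1) →
      supp m c = supp m c' → c = c') ∧
    (∀ x y : GaloisField 2 (2*m), x ≠ y →
      {c | c ∈ code m 1 (fun _ => f) ∧ wt m c = 2^(2*m-1) - 2^(m-1) ∧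
          x ∈ supp m c ∧ y ∈ supp m c}.ncard = 2^(2*m-2) - 2^(m-1)) ∧
    (∀ c c' : GaloisField 2 (2*m) → ZMod 2,
      c ∈ code m 1 (fun _ => f) → c' ∈ code m 1 (fun _ => f) →
      wt m c = 2^(2*m-1) - 2^(m-1) → wt m c' = 2^(2*m-1) - 2^(m-1) →
      supp m c ≠ supp m c' → (supp m c ∩ supp m c').ncard = 2^(2*m-2) - 2^(m-1)) := by
  classical
  have hm0 : m ≠ 0 := by omega
  refine ⟨?_, ?_, ?_, ?_⟩
  · -- Part 1
    have hrange : {c | c ∈ code m 1 (fun _ => f) ∧ wt m c = 2^(2*m-1) - 2^(m-1)}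
        = Set.range (cw m f) := by
      ext c
      rw [Set.mem_setOf_eq, minwt_iff m f hm hf c]
      simp [Set.mem_range, eq_comm]
    rw [hrange, ← Set.image_univ, Set.ncard_image_of_injective _ (cw_inj m f hm0),
      Set.ncard_univ]
    exact GaloisField.card 2 (2*m) (by omega)
  · -- Part 2
    intro c c' _ _ _ _ hsupp
    funext x
    have hx := Set.ext_iff.mp hsupp x
    simp only [supp, Set.mem_setOf_eq] at hx
    rcases zmod2_cases (c x) with h | h <;> rcases zmod2_cases (c' x) with h' | h' <;>
      simp_all
  · -- Part 3
    intro x y hxy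
    have hxy0 : x + y ≠ 0 := by
      intro h0
      apply hxy
      rw [← CharTwo.sub_eq_add] at h0
      exact sub_eq_zero.mp h0
    have hset : {c | c ∈ code m 1 (fun _ => f) ∧ wt m c = 2^(2*m-1) - 2^(m-1) ∧
          x ∈ supp m c ∧ y ∈ supp m c}
        = cw m f '' {w | cw m f w x ≠ 0 ∧ cw m f w y ≠ 0} := by
      ext c
      simp only [Set.mem_setOf_eq, Set.mem_image, supp]
      constructor
      · rintro ⟨hc, hw, hx', hy'⟩
        obtain ⟨w, rfl⟩ := (minwt_iff m f hm hf c).mp ⟨hc, hw⟩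
        exact ⟨w, ⟨hx', hy'⟩, rfl⟩
      · rintro ⟨w, ⟨hx', hy'⟩, rfl⟩
        obtain ⟨hc, hw⟩ := (minwt_iff m f hm hf _).mpr ⟨w, rfl⟩
        exact ⟨hc, hw, hx', hy'⟩
    rw [hset, Set.ncard_image_of_injective _ (cw_inj m f hm0)]
    have hfin : {w | cw m f w x ≠ 0 ∧ cw m f w y ≠ 0}.ncard
        = (Finset.univ.filter
            (fun w : GaloisField 2 (2*m) => cw m f w x ≠ 0 ∧ cw m f w y ≠ 0)).card := by
      rw [← Set.ncard_coe_finset]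
      congr 1
      ext w
      simp
    rw [hfin]
    have hA : ∑ w : GaloisField 2 (2*m), χ (cw m f w x) = 2^m := by
      have h1 : ∀ w : GaloisField 2 (2*m),
          χ (cw m f w x) = χ (f x) * (χ (δ m f w) * χ (tr m (w * x))) := by
        intro w; rw [cw, χ_add, χ_add]; ring
      rw [Finset.sum_congr rfl (fun w _ => h1 w), ← Finset.mul_sum, dual_sum m f hm0 hf x,
        show χ (f x) * (2^m * χ (f x)) = 2^m * (χ (f x) * χ (f x)) by ring, χ_sq, mul_one]
    have hB : ∑ w : GaloisField 2 (2*m), χ (cw m f w y) = 2^m := by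
      have h1 : ∀ w : GaloisField 2 (2*m),
          χ (cw m f w y) = χ (f y) * (χ (δ m f w) * χ (tr m (w * y))) := by
        intro w; rw [cw, χ_add, χ_add]; ring
      rw [Finset.sum_congr rfl (fun w _ => h1 w), ← Finset.mul_sum, dual_sum m f hm0 hf y,
        show χ (f y) * (2^m * χ (f y)) = 2^m * (χ (f y) * χ (f y)) by ring, χ_sq, mul_one]
    have hC : ∑ w : GaloisField 2 (2*m), χ (cw m f w x + cw m f w y) = 0 := by
      have hadd : ∀ w : GaloisField 2 (2*m),
          cw m f w x + cw m f w y = (f x + f y) + tr m ((x + y) * w) := by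
        intro w
        show (f x + tr m (w * x) + δ m f w) + (f y + tr m (w * y) + δ m f w) = _
        have e : (f x + tr m (w * x) + δ m f w) + (f y + tr m (w * y) + δ m f w)
            = (f x + f y) + (tr m (w * x) + tr m (w * y)) + (δ m f w + δ m f w) := by ring
        rw [e, CharTwo.add_self_eq_zero, add_zero, ← tr_add, ← mul_add, mul_comm]
      have h1 : ∀ w : GaloisField 2 (2*m),
          χ (cw m f w x + cw m f w y) = χ (f x + f y) * χ (tr m ((x + y) * w)) := by
        intro w; rw [hadd w, χ_add]
      rw [Finset.sum_congr rfl (fun w _ => h1 w), ← Finset.mul_sum, sum_chi m hm0 (x + y),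
        if_neg hxy0, mul_zero]
    have h4 := fourcount m hm0 (fun w => cw m f w x) (fun w => cw m f w y)
    rw [hA, hB, hC] at h4
    have hN := hNint m hm
    have hcast : ((Finset.univ.filter
        (fun w : GaloisField 2 (2*m) => cw m f w x ≠ 0 ∧ cw m f w y ≠ 0)).card : ℤ)
        = ((2^(2*m-2) - 2^(m-1) : ℕ) : ℤ) := by linarith
    exact_mod_cast hcast
  · -- Part 4
    intro c c' hc hc' hwc hwc' hsupp
    obtain ⟨w, rfl⟩ := (minwt_iff m f hm hf c).mp ⟨hc, hwc⟩
    obtain ⟨w', rfl⟩ := (minwt_iff m f hm hf c').mp ⟨hc', hwc'⟩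
    have hwne : w ≠ w' := by
      intro h; subst h; exact hsupp rfl
    have hune : w + w' ≠ 0 := by
      intro h0
      apply hwne
      rw [← CharTwo.sub_eq_add] at h0
      exact sub_eq_zero.mp h0
    have hinter : supp m (cw m f w) ∩ supp m (cw m f w')
        = {z | cw m f w z ≠ 0 ∧ cw m f w' z ≠ 0} := by
      ext z
      simp [supp, Set.mem_inter_iff]
    rw [hinter]
    have hfin : {z | cw m f w z ≠ 0 ∧ cw m f w' z ≠ 0}.ncard
        = (Finset.univ.filter
            (fun z : GaloisField 2 (2*m) => cw m f w z ≠ 0 ∧ cw m f w' z ≠ 0)).card := by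
      rw [← Set.ncard_coe_finset]
      congr 1
      ext z
      simp
    rw [hfin]
    have hA : ∑ z : GaloisField 2 (2*m), χ (cw m f w z) = 2^m := sum_chi_cw m f hf w
    have hB : ∑ z : GaloisField 2 (2*m), χ (cw m f w' z) = 2^m := sum_chi_cw m f hf w'
    have hC : ∑ z : GaloisField 2 (2*m), χ (cw m f w z + cw m f w' z) = 0 := by
      have hadd : ∀ z : GaloisField 2 (2*m),
          cw m f w z + cw m f w' z = (δ m f w + δ m f w') + tr m ((w + w') * z) := by
        intro z
        show (f z + tr m (w * z) + δ m f w) + (f z + tr m (w' * z) + δ m f w') = _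
        have e : (f z + tr m (w * z) + δ m f w) + (f z + tr m (w' * z) + δ m f w')
            = (f z + f z) + ((tr m (w * z) + tr m (w' * z)) + (δ m f w + δ m f w')) := by ring
        rw [e, CharTwo.add_self_eq_zero, zero_add, ← tr_add, ← add_mul, add_comm (tr m _)]
      have h1 : ∀ z : GaloisField 2 (2*m),
          χ (cw m f w z + cw m f w' z)
            = χ (δ m f w + δ m f w') * χ (tr m ((w + w') * z)) := by
        intro z; rw [hadd z, χ_add]
      rw [Finset.sum_congr rfl (fun z _ => h1 z), ← Finset.mul_sum, sum_chi m hm0 (w + w'),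
        if_neg hune, mul_zero]
    have h4 := fourcount m hm0 (cw m f w) (cw m f w')
    rw [hA, hB, hC] at h4
    have hN := hNint m hm
    have hcast : ((Finset.univ.filter
        (fun z : GaloisField 2 (2*m) => cw m f w z ≠ 0 ∧ cw m f w' z ≠ 0)).card : ℤ)
        = ((2^(2*m-2) - 2^(m-1) : ℕ) : ℤ) := by linarith
    exact_mod_cast hcast
end
end

section
/- Let m ≥ 2 and let f be a bent function from GF(2^{2m}) to GF(2). Then the design supported by the minimum weight codewords of C(f) has the symmetric difference property: for any three codewords u, v, w of C(f) of Hamming weight 2^{2m−1} − 2^{m−1}, the sum u + v + w (whose support is the symmetric difference of the supports of u, v, w) has Hamming weight either 2^{2m−1} − 2^{m−1} or 2^{2m−1} + 2^{m−1}; in the latter case its support is the complement of the support of a codeword of weight 2^{2m−1} − 2^{m−1}. -/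
noncomputable section

/-! A codeword of `C(f)` has the form `a f + Tr(bx) + c`. With the Walsh sum
`W(g) = ∑ₓ (-1)^g(x)`, a word has weight `2^(2m-1) ∓ 2^(m-1)` iff `W(g) = ±2^m`, while
affine words have `|W| ∈ {0, 2^(2m)}`; so the minimum weight words are exactly the
`f + Tr(bx) + c`. A sum of three of them is again of this form, i.e. a bent function
up to an affine term, of weight `2^(2m-1) ± 2^(m-1)`. Adding the all-one word complements
the support and negates `W`, which turns the `+` case into a minimum weight word. -/

lemma zmod_two_eq_zero_or_one (a : ZMod 2) : a = 0 ∨ a = 1 := by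
  decide +revert

section WalshSum

variable {α : Type*} [Fintype α]

def walshSum (g : α → ZMod 2) : ℤ := ∑ x, (-1 : ℤ) ^ (g x).val

lemma walshSum_add_const (g : α → ZMod 2) (c : ZMod 2) :
    walshSum (fun x => g x + c) = (-1) ^ c.val * walshSum g := by
  have h : ∀ a b : ZMod 2, (-1 : ℤ) ^ (a + b).val = (-1) ^ b.val * (-1) ^ a.val := by decide
  simp only [walshSum, h, Finset.mul_sum]

lemma walshSum_add_one (g : α → ZMod 2) : walshSum (g + 1) = -walshSum g :=
  (walshSum_add_const g 1).trans (neg_one_mul _)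

lemma abs_walshSum_add_const (g : α → ZMod 2) (c : ZMod 2) :
    |walshSum (fun x => g x + c)| = |walshSum g| := by
  simp [walshSum_add_const, abs_mul]

lemma walshSum_eq_card_sub (g : α → ZMod 2) :
    walshSum g = Fintype.card α - 2 * {x | g x ≠ 0}.ncard := by
  have h : ∀ a : ZMod 2, (-1 : ℤ) ^ a.val = 1 - 2 * if a ≠ 0 then 1 else 0 := by decide
  simp only [walshSum, h, Finset.sum_sub_distrib, ← Finset.mul_sum, Finset.sum_boole,
    Set.ncard_eq_toFinset_card', Set.toFinset_ofPred]
  simp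

lemma walshSum_addMonoidHom [AddGroup α] (φ : α →+ ZMod 2) :
    walshSum φ = 0 ∨ walshSum φ = Fintype.card α := by
  by_cases hφ : ∀ x, φ x = 0
  · right
    simp [walshSum, hφ]
  · left
    obtain ⟨x₀, hx₀⟩ := not_forall.1 hφ
    replace hx₀ : φ x₀ = 1 := (zmod_two_eq_zero_or_one _).resolve_left hx₀
    have hflip : walshSum φ = -walshSum φ := by
      calc walshSum φ = ∑ x, (-1 : ℤ) ^ (φ (x₀ + x)).val :=
            (Equiv.sum_comp (Equiv.addLeft x₀) fun x => (-1 : ℤ) ^ (φ x).val).symm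
        _ = walshSum (fun x => φ x + 1) := by
          simp only [map_add, hx₀, add_comm (1 : ZMod 2)]; rfl
        _ = -walshSum φ := walshSum_add_one φ
    omega

end WalshSum

section GaloisField

variable {m : ℕ}

lemma card_galoisField (hm : 1 ≤ m) : Fintype.card (GaloisField 2 (2 * m)) = 2 ^ (2 * m) := by
  rw [← Nat.card_eq_fintype_card, GaloisField.card 2 (2 * m) (by omega)]

lemma walshSum_eq_two_mul_sub_wt (hm : 1 ≤ m) (g : GaloisField 2 (2 * m) → ZMod 2) :
    walshSum g = 2 * (2 ^ (2 * m - 1) - wt m g) := by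
  rw [walshSum_eq_card_sub, card_galoisField hm, wt, mul_sub, mul_pow_sub_one (by omega)]
  push_cast; rfl

lemma wt_eq_sub_iff (hm : 1 ≤ m) (g : GaloisField 2 (2 * m) → ZMod 2) :
    wt m g = 2 ^ (2 * m - 1) - 2 ^ (m - 1) ↔ walshSum g = 2 ^ m := by
  have hle : 2 ^ (m - 1) ≤ 2 ^ (2 * m - 1) := Nat.pow_le_pow_right two_pos (by omega)
  rw [walshSum_eq_two_mul_sub_wt hm, ← mul_pow_sub_one (by omega : m ≠ 0)]
  zify [hle]
  omega

lemma wt_eq_add_iff (hm : 1 ≤ m) (g : GaloisField 2 (2 * m) → ZMod 2) :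
    wt m g = 2 ^ (2 * m - 1) + 2 ^ (m - 1) ↔ walshSum g = -2 ^ m := by
  rw [walshSum_eq_two_mul_sub_wt hm, ← mul_pow_sub_one (by omega : m ≠ 0)]
  zify
  omega

lemma supp_add_one (g : GaloisField 2 (2 * m) → ZMod 2) : supp m (g + 1) = (supp m g)ᶜ := by
  ext x
  simp only [supp, Set.mem_ofPred_eq, Set.mem_compl_iff, Pi.add_apply, Pi.one_apply]
  generalize g x = a
  decide +revert

def affineFun (m : ℕ) (b : GaloisField 2 (2 * m)) (c : ZMod 2) :
    GaloisField 2 (2 * m) → ZMod 2 :=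
  fun x => tr m (b * x) + c

lemma affineFun_add (b₁ b₂ : GaloisField 2 (2 * m)) (c₁ c₂ : ZMod 2) :
    affineFun m b₁ c₁ + affineFun m b₂ c₂ = affineFun m (b₁ + b₂) (c₁ + c₂) := by
  ext x
  simp only [affineFun, Pi.add_apply, add_mul, tr, map_add]
  ring

lemma abs_walshSum_affineFun (hm : 1 ≤ m) (b : GaloisField 2 (2 * m)) (c : ZMod 2) :
    |walshSum (affineFun m b c)| = 0 ∨ |walshSum (affineFun m b c)| = 2 ^ (2 * m) := by
  let φ : GaloisField 2 (2 * m) →+ ZMod 2 :=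
    AddMonoidHom.mk' (fun x => tr m (b * x)) fun x y => by simp only [mul_add, tr, map_add]
  change |walshSum (fun x => φ x + c)| = 0 ∨ |walshSum (fun x => φ x + c)| = 2 ^ (2 * m)
  rw [abs_walshSum_add_const]
  rcases walshSum_addMonoidHom φ with h | h <;> simp [h, card_galoisField hm]

lemma walshSum_add_affineFun (f : GaloisField 2 (2 * m) → ZMod 2) (b : GaloisField 2 (2 * m))
    (c : ZMod 2) :
    walshSum (f + affineFun m b c) = (-1) ^ c.val * walshSum (fun x => f x + tr m (b * x)) := by
  rw [← walshSum_add_const]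
  simp only [add_assoc]
  rfl

lemma wt_add_affineFun_of_isBent (hm : 1 ≤ m) {f : GaloisField 2 (2 * m) → ZMod 2}
    (hf : IsBent m f) (b : GaloisField 2 (2 * m)) (c : ZMod 2) :
    wt m (f + affineFun m b c) = 2 ^ (2 * m - 1) - 2 ^ (m - 1) ∨
      wt m (f + affineFun m b c) = 2 ^ (2 * m - 1) + 2 ^ (m - 1) := by
  have habs : |walshSum (f + affineFun m b c)| = 2 ^ m := by
    rw [walshSum_add_affineFun, abs_mul, abs_pow, abs_neg, abs_one, one_pow, one_mul]
    exact hf b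
  rw [wt_eq_sub_iff hm, wt_eq_add_iff hm]
  exact abs_eq (by positivity) |>.mp habs

lemma one_mem_code {ℓ : ℕ} {F : Fin ℓ → GaloisField 2 (2 * m) → ZMod 2} :
    1 ∈ code m ℓ F :=
  Submodule.subset_span (Or.inr rfl)

lemma exists_eq_smul_add_affineFun_of_mem_code {f g : GaloisField 2 (2 * m) → ZMod 2}
    (hg : g ∈ code m 1 (fun _ => f)) :
    ∃ (a : ZMod 2) (b : GaloisField 2 (2 * m)) (c : ZMod 2), g = a • f + affineFun m b c := by
  have hzero : affineFun m 0 0 = 0 := by ext x; simp [affineFun, tr]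
  induction hg using Submodule.span_induction with
  | mem g hg =>
    rcases hg with (⟨_, rfl⟩ | ⟨b, rfl⟩) | rfl
    · exact ⟨1, 0, 0, by rw [hzero, one_smul, add_zero]⟩
    · exact ⟨0, b, 0, by ext x; simp [affineFun]⟩
    · exact ⟨0, 0, 1, by ext x; simp [affineFun, tr]⟩
  | zero => exact ⟨0, 0, 0, by rw [hzero, zero_smul, add_zero]⟩
  | add g h _ _ hg hh =>
    obtain ⟨a₁, b₁, c₁, rfl⟩ := hg
    obtain ⟨a₂, b₂, c₂, rfl⟩ := hh
    exact ⟨a₁ + a₂, b₁ + b₂, c₁ + c₂, by rw [← affineFun_add, add_smul]; abel⟩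
  | smul r g _ hg =>
    obtain ⟨a, b, c, rfl⟩ := hg
    rcases zmod_two_eq_zero_or_one r with rfl | rfl
    · exact ⟨0, 0, 0, by rw [hzero, zero_smul, zero_smul, add_zero]⟩
    · exact ⟨a, b, c, one_smul _ _⟩

lemma exists_eq_add_affineFun_of_wt_eq (hm : 1 ≤ m) {f g : GaloisField 2 (2 * m) → ZMod 2}
    (hg : g ∈ code m 1 (fun _ => f)) (hwg : wt m g = 2 ^ (2 * m - 1) - 2 ^ (m - 1)) :
    ∃ b c, g = f + affineFun m b c := by
  obtain ⟨a, b, c, rfl⟩ := exists_eq_smul_add_affineFun_of_mem_code hg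
  rcases zmod_two_eq_zero_or_one a with rfl | rfl
  · rw [wt_eq_sub_iff hm, zero_smul, zero_add] at hwg
    have h2m : (2 : ℤ) ^ m ≠ 2 ^ (2 * m) :=
      (pow_right_injective₀ two_pos (by norm_num)).ne (by omega)
    rcases abs_walshSum_affineFun hm b c with h | h <;> rw [hwg, abs_pow, abs_two] at h
    · exact absurd h (by positivity)
    · exact absurd h h2m
  · exact ⟨b, c, by rw [one_smul]⟩

end GaloisField

/-- the design supported by the minimum weight codewords of the
code `C(f)` of a bent function `f` has the symmetric difference property. -/
theorem stmt_4 (m : ℕ) (hm : 2 ≤ m)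
    (f : GaloisField 2 (2*m) → ZMod 2) (hf : IsBent m f)
    (u v w : GaloisField 2 (2*m) → ZMod 2)
    (hu : u ∈ code m 1 (fun _ => f)) (hv : v ∈ code m 1 (fun _ => f))
    (hw : w ∈ code m 1 (fun _ => f))
    (hwu : wt m u = 2^(2*m-1) - 2^(m-1)) (hwv : wt m v = 2^(2*m-1) - 2^(m-1))
    (hww : wt m w = 2^(2*m-1) - 2^(m-1)) :
    wt m (u + v + w) = 2^(2*m-1) - 2^(m-1) ∨
    (wt m (u + v + w) = 2^(2*m-1) + 2^(m-1) ∧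
      ∃ c ∈ code m 1 (fun _ => f), wt m c = 2^(2*m-1) - 2^(m-1) ∧
        supp m (u + v + w) = (supp m c)ᶜ) := by
  have hm₁ : 1 ≤ m := by omega
  have huvw : u + v + w ∈ code m 1 (fun _ => f) := add_mem (add_mem hu hv) hw
  obtain ⟨b, c, hbc⟩ : ∃ b c, u + v + w = f + affineFun m b c := by
    obtain ⟨b₁, c₁, rfl⟩ := exists_eq_add_affineFun_of_wt_eq hm₁ hu hwu
    obtain ⟨b₂, c₂, rfl⟩ := exists_eq_add_affineFun_of_wt_eq hm₁ hv hwv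
    obtain ⟨b₃, c₃, rfl⟩ := exists_eq_add_affineFun_of_wt_eq hm₁ hw hww
    refine ⟨b₁ + b₂ + b₃, c₁ + c₂ + c₃, ?_⟩
    rw [← affineFun_add, ← affineFun_add]
    linear_combination ZModModule.add_self f
  rcases wt_add_affineFun_of_isBent hm₁ hf b c with h | h <;> rw [← hbc] at h
  · exact Or.inl h
  · refine Or.inr ⟨h, u + v + w + 1, add_mem huvw one_mem_code, ?_, ?_⟩
    · rw [wt_eq_sub_iff hm₁, walshSum_add_one, (wt_eq_add_iff hm₁ _).1 h, neg_neg]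
    · rw [supp_add_one, compl_compl]
end
end

section
/- Let m ≥ 2, 1 ≤ ℓ ≤ m, and let (f_1, …, f_ℓ) be a (2m, ℓ) bent vectorial function on GF(2^{2m}). Fix a codeword u of C(f_1, …, f_ℓ) of Hamming weight 2^{2m−1} − 2^{m−1} and let B = supp(u). If v and w are two distinct codewords of weight 2^{2m−1} − 2^{m−1} with |B ∩ supp(v)| = |B ∩ supp(w)| = 2^{2m−2} − 2^{m−1} and B ∩ supp(v) ≠ B ∩ supp(w), then |B ∩ supp(v) ∩ supp(w)| equals either 2^{2m−3} − 2^{m−2} or 2^{2m−3} − 2^{m−1}; that is, the derived incidence structure on B is a quasi-symmetric design with these two intersection numbers. -/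
noncomputable section

namespace Stmt10Aux

instance (n : ℕ) : DecidableEq (GaloisField 2 n) := Classical.decEq _

variable {m : ℕ}

def S (m : ℕ) (c : GaloisField 2 (2*m) → ZMod 2) : ℤ :=
  ∑ x : GaloisField 2 (2*m), (-1 : ℤ) ^ ((c x).val)

def N (m : ℕ) (c : GaloisField 2 (2*m) → ZMod 2) : Finset (GaloisField 2 (2*m)) :=
  Finset.univ.filter (fun x => c x = 1)

def ind (a : ZMod 2) : ℤ := if a = 1 then 1 else 0

lemma expand1 : ∀ a : ZMod 2, (-1 : ℤ) ^ a.val = 1 - 2 * ind a := by decide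

lemma expand2 : ∀ a b : ZMod 2, (-1 : ℤ) ^ ((a+b).val)
    = 1 - 2 * ind a - 2 * ind b + 4 * (ind a * ind b) := by decide

lemma expand3 : ∀ a b c : ZMod 2, (-1 : ℤ) ^ ((a+b+c).val)
    = 1 - 2 * ind a - 2 * ind b - 2 * ind c
      + 4 * (ind a * ind b) + 4 * (ind a * ind c) + 4 * (ind b * ind c)
      - 8 * (ind a * ind b * ind c) := by decide

lemma split_add : ∀ a b : ZMod 2,
    (-1 : ℤ) ^ ((a+b).val) = (-1 : ℤ)^a.val * (-1 : ℤ)^b.val := by decide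

lemma sum_ind (c : GaloisField 2 (2*m) → ZMod 2) :
    ∑ x : GaloisField 2 (2*m), ind (c x) = ((N m c).card : ℤ) := by
  simpa [ind, N] using Finset.sum_boole (fun x => c x = 1)
    (Finset.univ : Finset (GaloisField 2 (2*m)))

lemma sum_ind2 (u v : GaloisField 2 (2*m) → ZMod 2) :
    ∑ x : GaloisField 2 (2*m), ind (u x) * ind (v x) = (((N m u) ∩ (N m v)).card : ℤ) := by
  have h : ∀ x : GaloisField 2 (2*m), ind (u x) * ind (v x)
      = if (u x = 1 ∧ v x = 1) then (1:ℤ) else 0 := fun x =>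
    (show ∀ a b : ZMod 2, ind a * ind b = if (a = 1 ∧ b = 1) then (1:ℤ) else 0 by decide) _ _
  rw [Finset.sum_congr rfl (fun x _ => h x), Finset.sum_boole]
  norm_cast
  congr 1
  ext x
  simp [N]

lemma sum_ind3 (u v w : GaloisField 2 (2*m) → ZMod 2) :
    ∑ x : GaloisField 2 (2*m), ind (u x) * ind (v x) * ind (w x)
      = (((N m u) ∩ (N m v) ∩ (N m w)).card : ℤ) := by
  have h : ∀ x : GaloisField 2 (2*m), ind (u x) * ind (v x) * ind (w x)
      = if ((u x = 1 ∧ v x = 1) ∧ w x = 1) then (1:ℤ) else 0 := fun x =>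
    (show ∀ a b c : ZMod 2,
      ind a * ind b * ind c = if ((a = 1 ∧ b = 1) ∧ c = 1) then (1:ℤ) else 0 by decide) _ _ _
  rw [Finset.sum_congr rfl (fun x _ => h x), Finset.sum_boole]
  norm_cast
  congr 1
  ext x
  simp [N, and_assoc]

lemma S_one (c : GaloisField 2 (2*m) → ZMod 2) :
    S m c = (Fintype.card (GaloisField 2 (2*m)) : ℤ) - 2 * (N m c).card := by
  rw [S, Finset.sum_congr rfl (fun x _ => expand1 (c x))]
  simp only [Finset.sum_sub_distrib, ← Finset.mul_sum, sum_ind]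
  simp [Finset.card_univ]

lemma S_two (u v : GaloisField 2 (2*m) → ZMod 2) :
    S m (u + v) = (Fintype.card (GaloisField 2 (2*m)) : ℤ)
      - 2 * (N m u).card - 2 * (N m v).card + 4 * (((N m u) ∩ (N m v)).card) := by
  rw [S]
  simp only [Pi.add_apply]
  rw [Finset.sum_congr rfl (fun x _ => expand2 (u x) (v x))]
  simp only [Finset.sum_add_distrib, Finset.sum_sub_distrib, ← Finset.mul_sum]
  rw [sum_ind, sum_ind, sum_ind2]
  simp [Finset.card_univ]

lemma S_three (u v w : GaloisField 2 (2*m) → ZMod 2) :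
    S m (u + v + w) = (Fintype.card (GaloisField 2 (2*m)) : ℤ)
      - 2 * (N m u).card - 2 * (N m v).card - 2 * (N m w).card
      + 4 * (((N m u) ∩ (N m v)).card) + 4 * (((N m u) ∩ (N m w)).card)
      + 4 * (((N m v) ∩ (N m w)).card)
      - 8 * (((N m u) ∩ (N m v) ∩ (N m w)).card) := by
  rw [S]
  simp only [Pi.add_apply]
  rw [Finset.sum_congr rfl (fun x _ => expand3 (u x) (v x) (w x))]
  simp only [Finset.sum_add_distrib, Finset.sum_sub_distrib, ← Finset.mul_sum]
  rw [sum_ind, sum_ind, sum_ind, sum_ind2, sum_ind2, sum_ind2, sum_ind3]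
  simp [Finset.card_univ]

lemma ne01 : ∀ a : ZMod 2, a ≠ 0 ↔ a = 1 := by decide

lemma wt_eq (c : GaloisField 2 (2*m) → ZMod 2) : wt m c = (N m c).card := by
  rw [wt]
  have h : {x | c x ≠ 0} = (↑(N m c) : Set (GaloisField 2 (2*m))) := by
    ext x; simp [N, ne01 (c x)]
  rw [h, Set.ncard_coe_finset]

lemma supp_inter2 (u v : GaloisField 2 (2*m) → ZMod 2) :
    (supp m u ∩ supp m v).ncard = ((N m u) ∩ (N m v)).card := by
  have h : supp m u ∩ supp m v = (↑((N m u) ∩ (N m v)) : Set (GaloisField 2 (2*m))) := by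
    ext x; simp [supp, N, ne01 (u x), ne01 (v x)]
  rw [h, Set.ncard_coe_finset]

lemma supp_inter3 (u v w : GaloisField 2 (2*m) → ZMod 2) :
    (supp m u ∩ supp m v ∩ supp m w).ncard = ((N m u) ∩ (N m v) ∩ (N m w)).card := by
  have h : supp m u ∩ supp m v ∩ supp m w
      = (↑((N m u) ∩ (N m v) ∩ (N m w)) : Set (GaloisField 2 (2*m))) := by
    ext x; simp [supp, N, ne01 (u x), ne01 (v x), ne01 (w x)]
    tauto
  rw [h, Set.ncard_coe_finset]

lemma tr_add (x y : GaloisField 2 (2*m)) : tr m (x + y) = tr m x + tr m y :=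
  map_add (Algebra.trace (ZMod 2) (GaloisField 2 (2*m))) x y

lemma tr_zero : tr m (0 : GaloisField 2 (2*m)) = 0 :=
  map_zero (Algebra.trace (ZMod 2) (GaloisField 2 (2*m)))

def Phi (m ℓ : ℕ) (f : Fin ℓ → GaloisField 2 (2*m) → ZMod 2)
    (a : Fin ℓ → ZMod 2) (w : GaloisField 2 (2*m)) (ε : ZMod 2) :
    GaloisField 2 (2*m) → ZMod 2 :=
  fun x => (∑ j, a j * f j x) + tr m (w * x) + ε

lemma Phi_add {ℓ : ℕ} (f : Fin ℓ → GaloisField 2 (2*m) → ZMod 2)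
    (a a' : Fin ℓ → ZMod 2) (w w' : GaloisField 2 (2*m)) (ε ε' : ZMod 2) :
    Phi m ℓ f a w ε + Phi m ℓ f a' w' ε' = Phi m ℓ f (a+a') (w+w') (ε+ε') := by
  funext x
  simp only [Pi.add_apply, Phi, add_mul, tr_add, Finset.sum_add_distrib]
  ring

lemma Phi_zero {ℓ : ℕ} (f : Fin ℓ → GaloisField 2 (2*m) → ZMod 2)
    (w : GaloisField 2 (2*m)) (ε : ZMod 2) :
    Phi m ℓ f 0 w ε = fun x => tr m (w * x) + ε := by
  funext x; simp [Phi]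

lemma decomp {ℓ : ℕ} {f : Fin ℓ → GaloisField 2 (2*m) → ZMod 2}
    {c : GaloisField 2 (2*m) → ZMod 2} (hc : c ∈ code m ℓ f) :
    ∃ a w ε, c = Phi m ℓ f a w ε := by
  refine Submodule.span_induction ?_ ?_ ?_ ?_ hc
  · rintro x ((⟨j, rfl⟩ | ⟨w, rfl⟩) | rfl)
    · refine ⟨Pi.single j 1, 0, 0, ?_⟩
      funext x
      simp [Phi, Pi.single_apply, tr_zero, ite_mul, Finset.sum_ite_eq']
    · exact ⟨0, w, 0, by funext x; simp [Phi]⟩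
    · exact ⟨0, 0, 1, by funext x; simp [Phi, tr_zero]⟩
  · exact ⟨0, 0, 0, by funext x; simp [Phi, tr_zero]⟩
  · rintro x y hx hy ⟨a, w, ε, rfl⟩ ⟨a', w', ε', rfl⟩
    exact ⟨a + a', w + w', ε + ε', Phi_add f a a' w w' ε ε'⟩
  · rintro r x hx ⟨a, w, ε, rfl⟩
    rcases (show ∀ r : ZMod 2, r = 0 ∨ r = 1 by decide) r with rfl | rfl
    · exact ⟨0, 0, 0, by funext x; simp [Phi, tr_zero]⟩
    · exact ⟨a, w, ε, by rw [one_smul]⟩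

lemma S_bent {ℓ : ℕ} {f : Fin ℓ → GaloisField 2 (2*m) → ZMod 2}
    (hf : IsBentVectorial m ℓ f) {a : Fin ℓ → ZMod 2} (ha : a ≠ 0)
    (w : GaloisField 2 (2*m)) (ε : ZMod 2) :
    |S m (Phi m ℓ f a w ε)| = 2^m := by
  have hb := hf a ha w
  rw [S]
  simp only [Phi]
  rw [Finset.sum_congr rfl (fun x _ => split_add ((∑ j, a j * f j x) + tr m (w * x)) ε),
    ← Finset.sum_mul, abs_mul, abs_pow, abs_neg, abs_one, one_pow, mul_one]
  simpa using hb

lemma tr_exists (hm : m ≠ 0) : ∃ z : GaloisField 2 (2*m), tr m z = 1 := by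
  haveI : Algebra.IsAlgebraic (ZMod 2) (GaloisField 2 (2*m)) := Algebra.IsAlgebraic.of_finite _ _
  haveI : Algebra.IsSeparable (ZMod 2) (GaloisField 2 (2*m)) :=
    Algebra.IsAlgebraic.isSeparable_of_perfectField
  have h := Algebra.trace_ne_zero (ZMod 2) (GaloisField 2 (2*m))
  have : ∃ z : GaloisField 2 (2*m), tr m z ≠ 0 := by
    by_contra hcon
    push_neg at hcon
    exact h (LinearMap.ext fun z => hcon z)
  obtain ⟨z, hz⟩ := this
  exact ⟨z, ((ne01 (tr m z)).mp hz)⟩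

lemma S_affine (hm : m ≠ 0) {w : GaloisField 2 (2*m)} (hw : w ≠ 0) (ε : ZMod 2) :
    S m (fun x => tr m (w * x) + ε) = 0 := by
  obtain ⟨z, hz⟩ := tr_exists hm
  set y := w⁻¹ * z with hy
  have hwy : tr m (w * y) = 1 := by
    rw [hy, ← mul_assoc, mul_inv_cancel₀ hw, one_mul, hz]
  have key : S m (fun x => tr m (w * x) + ε) = - S m (fun x => tr m (w * x) + ε) := by
    conv_lhs => rw [S, ← Equiv.sum_comp (Equiv.addRight y)
      (fun x => (-1:ℤ)^((tr m (w * x) + ε).val))]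
    rw [S, ← Finset.sum_neg_distrib]
    refine Finset.sum_congr rfl (fun x _ => ?_)
    have h1 : (Equiv.addRight y) x = x + y := rfl
    rw [h1, mul_add, tr_add, hwy]
    exact (show ∀ s t : ZMod 2, (-1:ℤ)^((s + 1 + t).val) = -(-1:ℤ)^((s + t).val) by decide)
      (tr m (w * x)) ε
  omega

lemma S_const_one :
    S m (fun _ => (1 : ZMod 2)) = -(Fintype.card (GaloisField 2 (2*m)) : ℤ) := by
  rw [S]
  simp [show ((1 : ZMod 2)).val = 1 from rfl, Finset.card_univ]

lemma S_affine_cases (hm : m ≠ 0) (w : GaloisField 2 (2*m)) (ε : ZMod 2) :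
    S m (fun x => tr m (w * x) + ε) = 0
    ∨ (fun x => tr m (w * x) + ε) = (fun _ => (0 : ZMod 2))
    ∨ S m (fun x => tr m (w * x) + ε) = -(Fintype.card (GaloisField 2 (2*m)) : ℤ) := by
  by_cases hw : w = 0
  · subst hw
    have h0 : (fun x => tr m ((0 : GaloisField 2 (2*m)) * x) + ε) = (fun _ => ε) := by
      funext x; simp [tr_zero]
    rcases (show ∀ e : ZMod 2, e = 0 ∨ e = 1 by decide) ε with rfl | rfl
    · exact Or.inr (Or.inl h0)
    · refine Or.inr (Or.inr ?_)
      rw [h0]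
      exact S_const_one
  · exact Or.inl (S_affine hm hw ε)

end Stmt10Aux

/-- the derived incidence structure on a block `B = supp u` is
quasi-symmetric with intersection numbers `2^(2m-3) - 2^(m-2)` and
`2^(2m-3) - 2^(m-1)`. -/
theorem stmt_10 (m ℓ : ℕ) (hm : 2 ≤ m) (hℓ1 : 1 ≤ ℓ) (hℓm : ℓ ≤ m)
    (f : Fin ℓ → GaloisField 2 (2*m) → ZMod 2) (hf : IsBentVectorial m ℓ f)
    (u : GaloisField 2 (2*m) → ZMod 2)
    (hu : u ∈ code m ℓ f) (hwu : wt m u = 2^(2*m-1) - 2^(m-1))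
    (v w : GaloisField 2 (2*m) → ZMod 2)
    (hv : v ∈ code m ℓ f) (hw : w ∈ code m ℓ f)
    (hwv : wt m v = 2^(2*m-1) - 2^(m-1)) (hww : wt m w = 2^(2*m-1) - 2^(m-1))
    (hBv : (supp m u ∩ supp m v).ncard = 2^(2*m-2) - 2^(m-1))
    (hBw : (supp m u ∩ supp m w).ncard = 2^(2*m-2) - 2^(m-1))
    (hvw : v ≠ w) (hBvw : supp m u ∩ supp m v ≠ supp m u ∩ supp m w) :
    (supp m u ∩ supp m v ∩ supp m w).ncard = 2^(2*m-3) - 2^(m-2) ∨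
    (supp m u ∩ supp m v ∩ supp m w).ncard = 2^(2*m-3) - 2^(m-1) := by
  open Stmt10Aux in
  have hm0 : m ≠ 0 := by omega
  obtain ⟨a, wu, ε, hue⟩ := Stmt10Aux.decomp hu
  obtain ⟨b, wv, δ, hve⟩ := Stmt10Aux.decomp hv
  obtain ⟨c, ww', γ, hwe⟩ := Stmt10Aux.decomp hw
  -- cardinality and power facts
  have hcard : Fintype.card (GaloisField 2 (2*m)) = 2^(2*m) := by
    rw [← Nat.card_eq_fintype_card]; exact GaloisField.card 2 (2*m) (by omega)
  have e1 : (2:ℕ)^(2*m) = 8 * 2^(2*m-3) := by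
    conv_lhs => rw [show 2*m = 3 + (2*m-3) by omega]
    rw [pow_add]; norm_num
  have e2 : (2:ℕ)^(2*m-1) = 4 * 2^(2*m-3) := by
    conv_lhs => rw [show 2*m-1 = 2 + (2*m-3) by omega]
    rw [pow_add]; norm_num
  have e3 : (2:ℕ)^(2*m-2) = 2 * 2^(2*m-3) := by
    conv_lhs => rw [show 2*m-2 = 1 + (2*m-3) by omega]
    rw [pow_add]; norm_num
  have e4 : (2:ℕ)^m = 4 * 2^(m-2) := by
    conv_lhs => rw [show m = 2 + (m-2) by omega]
    rw [pow_add]; norm_num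
  have e5 : (2:ℕ)^(m-1) = 2 * 2^(m-2) := by
    conv_lhs => rw [show m-1 = 1 + (m-2) by omega]
    rw [pow_add]; norm_num
  have e6 : 1 ≤ (2:ℕ)^(m-2) := Nat.one_le_two_pow
  have e8 : (2:ℕ)^(m-1) ≤ 2^(2*m-3) := Nat.pow_le_pow_right (by norm_num) (by omega)
  have hzpow : ((2:ℤ))^m = ((2^m : ℕ) : ℤ) := by push_cast; ring
  -- counts
  have hA := hwu; rw [Stmt10Aux.wt_eq] at hA
  have hB := hwv; rw [Stmt10Aux.wt_eq] at hB
  have hC := hww; rw [Stmt10Aux.wt_eq] at hC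
  have hI1 := hBv; rw [Stmt10Aux.supp_inter2] at hI1
  have hI2 := hBw; rw [Stmt10Aux.supp_inter2] at hI2
  -- S equations
  have hSu := Stmt10Aux.S_one (m := m) u
  have hSvw := Stmt10Aux.S_two (m := m) v w
  have hSuvw := Stmt10Aux.S_three (m := m) u v w
  -- step 1 : a ≠ 0
  have ha : a ≠ 0 := by
    intro h0
    subst h0
    have hufun : u = fun x => tr m (wu * x) + ε := by rw [hue, Stmt10Aux.Phi_zero]
    rcases Stmt10Aux.S_affine_cases (m := m) hm0 wu ε with h | h | h
    · have hS0 : S m u = 0 := by rw [hufun]; exact h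
      rw [hSu] at hS0
      omega
    · have hS0 : S m u = (Fintype.card (GaloisField 2 (2*m)) : ℤ) := by
        rw [hufun, h, S]
        simp [show ((0 : ZMod 2)).val = 0 from rfl, Finset.card_univ]
      rw [hSu] at hS0
      omega
    · have hS0 : S m u = -(Fintype.card (GaloisField 2 (2*m)) : ℤ) := by
        rw [hufun]; exact h
      rw [hSu] at hS0
      omega
  -- step 2 : b = a and c = a
  have hba : b = a := by
    by_contra hne
    have hab : a + b ≠ 0 := by
      intro h0
      apply hne
      funext j
      have hj := congrFun h0 j
      exact ((show ∀ s t : ZMod 2, s + t = 0 → t = s by decide) _ _ hj)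
    have habs : |S m (u + v)| = 2^m := by
      rw [hue, hve, Stmt10Aux.Phi_add]
      exact Stmt10Aux.S_bent hf hab _ _
    rw [Stmt10Aux.S_two, hzpow] at habs
    rcases (abs_eq (by positivity)).mp habs with h | h <;> omega
  have hca : c = a := by
    by_contra hne
    have hab : a + c ≠ 0 := by
      intro h0
      apply hne
      funext j
      have hj := congrFun h0 j
      exact ((show ∀ s t : ZMod 2, s + t = 0 → t = s by decide) _ _ hj)
    have habs : |S m (u + w)| = 2^m := by
      rw [hue, hwe, Stmt10Aux.Phi_add]
      exact Stmt10Aux.S_bent hf hab _ _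
    rw [Stmt10Aux.S_two, hzpow] at habs
    rcases (abs_eq (by positivity)).mp habs with h | h <;> omega
  -- step 3 : v + w is affine
  have hbc : b + c = 0 := by
    rw [hba, hca]
    funext j
    exact (show ∀ t : ZMod 2, t + t = 0 by decide) (a j)
  have hvwfun : v + w = fun x => tr m ((wv + ww') * x) + (δ + γ) := by
    rw [hve, hwe, Stmt10Aux.Phi_add, hbc, Stmt10Aux.Phi_zero]
  have hJ : S m (v + w) = 0 := by
    rcases Stmt10Aux.S_affine_cases (m := m) hm0 (wv + ww') (δ + γ) with h | h | h
    · rw [hvwfun]; exact h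
    · exfalso
      apply hvw
      funext x
      have hx := congrFun (hvwfun.trans h) x
      exact (show ∀ s t : ZMod 2, s + t = 0 → s = t by decide) _ _ hx
    · exfalso
      have hS0 : S m (v + w) = -(Fintype.card (GaloisField 2 (2*m)) : ℤ) := by
        rw [hvwfun]; exact h
      rw [hSvw] at hS0
      have hJpos : (0:ℤ) ≤ (((N m v) ∩ (N m w)).card : ℤ) := by positivity
      omega
  rw [hSvw] at hJ
  -- step 4 : u + v + w is bent
  have habc : a + b + c = a := by
    rw [hba, hca]
    funext j
    exact (show ∀ t : ZMod 2, t + t + t = t by decide) (a j)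
  have hfin : |S m (u + v + w)| = 2^m := by
    rw [hue, hve, hwe, Stmt10Aux.Phi_add, Stmt10Aux.Phi_add, habc]
    exact Stmt10Aux.S_bent hf ha _ _
  rw [hSuvw, hzpow] at hfin
  rw [Stmt10Aux.supp_inter3]
  rcases (abs_eq (by positivity)).mp hfin with h | h
  · right; omega
  · left; omega
end
end
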